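/- arXiv:2406.14153 — 7 statements merged into one kernel-verified Lean document; each statement's English description precedes it below -/
import Mathlib

section
/- Let G=(V,E) be a finite simple graph that is a tree (connected and acyclic). Then TRA(G) ⊆ COR(G), and hence COR(G) = TRA(G): for every p : V → [0,1] and every q : E → ℝ satisfying max(0, p(i)+p(j)−1) ≤ q({i,j}) ≤ min(p(i), p(j)) for all edges {i,j} ∈ E, the pair (p,q) lies in COR(G). -/
/-!
Root the tree at `r`, write `π v` for the parent of `v ≠ r`, and think of a probability
distribution `w` on `{0,1}^V` as a random vertex `u_f` of `COR(G)`; its mean is `(p, q)` as soon as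
the marginals of `w` are `p` and `P(f v = f (π v) = 1) = q {v, π v}`.
Start from independent coordinates with the right marginals, and treat the vertices `v ≠ r` in
order of increasing depth: forget coordinate `v` and draw it afresh from a two-state Markov kernel
driven by its parent, `P(1 ∣ 1) = q / p(π v)` and `P(1 ∣ 0) = (p v - q) / (1 - p(π v))`. The
transportation inequalities say exactly that these are probabilities, and the resampling leaves
every statistic not involving `v` unchanged; since `v` is deeper than every vertex treated
before, no edge already fixed involves `v`.
-/

noncomputable section

/-- The extremal point of the correlation polytope associated to a 0/1 assignment. -/
def corPoint {V : Type} (G : SimpleGraph V) (f : V → Bool) :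
    (V → ℝ) × (G.edgeSet → ℝ) :=
  (fun i => if f i then 1 else 0,
   fun e => Sym2.lift ⟨fun i j => (if f i then (1 : ℝ) else 0) * (if f j then 1 else 0),
     fun _ _ => mul_comm _ _⟩ e.1)

/-- The correlation polytope `COR(G)` of a graph `G`. -/
def cor {V : Type} (G : SimpleGraph V) : Set ((V → ℝ) × (G.edgeSet → ℝ)) :=
  convexHull ℝ (Set.range (corPoint G))

open Finset Function

namespace CorrelationPolytope

variable {V : Type}

def coord (f : V → Bool) (i : V) : ℝ := if f i then 1 else 0

lemma coord_update_of_ne [DecidableEq V] {i v : V} (h : i ≠ v) (f : V → Bool) (b : Bool) :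
    coord (update f v b) i = coord f i := by
  simp [coord, update_of_ne h]

variable [Fintype V] [DecidableEq V]

def IsProbWeights (w : (V → Bool) → ℝ) : Prop := (∀ f, 0 ≤ w f) ∧ ∑ f, w f = 1

theorem sum_eq_sum_sum_update (v : V) (H : (V → Bool) → ℝ) :
    ∑ f, H f = ∑ f with f v = false, ∑ b, H (update f v b) := by
  rw [← sum_product']
  symm
  refine sum_nbij' (fun x => update x.1 v x.2) (fun g => (update g v false, g v)) ?_ ?_ ?_ ?_ ?_
    <;> simp +contextual

/-- Forget coordinate `v` of `w` and draw it afresh, equal to `true` with probability `R f`. -/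
def resample (w : (V → Bool) → ℝ) (v : V) (R : (V → Bool) → ℝ) (f : V → Bool) : ℝ :=
  (w (update f v true) + w (update f v false)) * if f v then R f else 1 - R f

section Resample

variable {w : (V → Bool) → ℝ} {v : V} {R : (V → Bool) → ℝ}

theorem sum_resample_mul (hR : ∀ f b, R (update f v b) = R f) (X : (V → Bool) → ℝ) :
    ∑ f, resample w v R f * X f =
      ∑ f, w f * (R f * X (update f v true) + (1 - R f) * X (update f v false)) := by
  rw [sum_eq_sum_sum_update v, sum_eq_sum_sum_update v]
  refine sum_congr rfl fun f hf => ?_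
  have hf : update f v false = f := by simpa [update_eq_iff] using hf
  simp only [Fintype.sum_bool, resample, update_idem, update_self, hR, hf, if_true,
    Bool.false_eq_true, if_false]
  ring

theorem sum_resample_mul_of_update (hR : ∀ f b, R (update f v b) = R f) {X : (V → Bool) → ℝ}
    (hX : ∀ f b, X (update f v b) = X f) :
    ∑ f, resample w v R f * X f = ∑ f, w f * X f := by
  simp only [sum_resample_mul hR, hX]
  exact sum_congr rfl fun f _ => by ring

theorem isProbWeights_resample (hw : IsProbWeights w) (hR : ∀ f b, R (update f v b) = R f)
    (hR₀ : ∀ f, 0 ≤ R f) (hR₁ : ∀ f, R f ≤ 1) : IsProbWeights (resample w v R) := by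
  refine ⟨fun f => mul_nonneg (add_nonneg (hw.1 _) (hw.1 _)) ?_, ?_⟩
  · split_ifs
    exacts [hR₀ f, sub_nonneg.2 (hR₁ f)]
  · simpa [hw.2] using sum_resample_mul_of_update (w := w) hR (X := fun _ => 1) fun _ _ => rfl

theorem sum_resample_mul_coord_mul (hR : ∀ f b, R (update f v b) = R f)
    {Y : (V → Bool) → ℝ} (hY : ∀ f b, Y (update f v b) = Y f) :
    ∑ f, resample w v R f * (coord f v * Y f) = ∑ f, w f * (R f * Y f) := by
  rw [sum_resample_mul hR]
  simp [coord, hY]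

end Resample

theorem exists_resample_coord {w : (V → Bool) → ℝ} (hw : IsProbWeights w) (v : V) {x : ℝ}
    (hx₀ : 0 ≤ x) (hx₁ : x ≤ 1) :
    ∃ w', IsProbWeights w' ∧
      (∀ X : (V → Bool) → ℝ, (∀ f b, X (update f v b) = X f) →
        ∑ f, w' f * X f = ∑ f, w f * X f) ∧
      ∑ f, w' f * coord f v = x := by
  have hR : ∀ (f : V → Bool) (b : Bool), (fun _ => x) (update f v b) = (fun _ => x) f :=
    fun _ _ => rfl
  refine ⟨resample w v fun _ => x, isProbWeights_resample hw hR (fun _ => hx₀) (fun _ => hx₁),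
    fun X hX => sum_resample_mul_of_update hR hX, ?_⟩
  simpa [← sum_mul, hw.2] using
    sum_resample_mul_coord_mul (w := w) (v := v) (R := fun _ => x) hR (Y := fun _ => 1)
      fun _ _ => rfl

theorem exists_transition_probs {x y c : ℝ} (hy₀ : 0 ≤ y) (hy₁ : y ≤ 1)
    (hc : max 0 (x + y - 1) ≤ c ∧ c ≤ min x y) :
    ∃ α β : ℝ, (0 ≤ α ∧ α ≤ 1) ∧ (0 ≤ β ∧ β ≤ 1) ∧ α * y = c ∧ β * (1 - y) = x - c := by
  obtain ⟨hc₀, hcxy⟩ := max_le_iff.1 hc.1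
  obtain ⟨hcx, hcy⟩ := le_min_iff.1 hc.2
  refine ⟨c / y, (x - c) / (1 - y), ⟨div_nonneg hc₀ hy₀, div_le_one_of_le₀ hcy hy₀⟩,
    ⟨div_nonneg (by linarith) (by linarith), div_le_one_of_le₀ (by linarith) (by linarith)⟩,
    ?_, ?_⟩
  · rcases hy₀.eq_or_lt with rfl | hy
    · simp; linarith
    · field_simp
  · rcases hy₁.eq_or_lt with rfl | hy
    · simp; linarith
    · have : 1 - y ≠ 0 := by linarith
      field_simp

theorem exists_resample_correlated {w : (V → Bool) → ℝ} (hw : IsProbWeights w) {u v : V}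
    (huv : u ≠ v) {x c : ℝ}
    (hu₀ : 0 ≤ ∑ f, w f * coord f u) (hu₁ : ∑ f, w f * coord f u ≤ 1)
    (hc : max 0 (x + ∑ f, w f * coord f u - 1) ≤ c ∧ c ≤ min x (∑ f, w f * coord f u)) :
    ∃ w', IsProbWeights w' ∧
      (∀ X : (V → Bool) → ℝ, (∀ f b, X (update f v b) = X f) →
        ∑ f, w' f * X f = ∑ f, w f * X f) ∧
      ∑ f, w' f * coord f v = x ∧ ∑ f, w' f * (coord f v * coord f u) = c := by
  obtain ⟨α, β, hα, hβ, hαc, hβc⟩ := exists_transition_probs hu₀ hu₁ hc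
  set R : (V → Bool) → ℝ := fun f => β + (α - β) * coord f u
  have hR : ∀ f b, R (update f v b) = R f := by simp [R, coord_update_of_ne huv]
  have hR₀₁ : ∀ f, 0 ≤ R f ∧ R f ≤ 1 := by
    intro f; simp only [R, coord]; split_ifs <;> constructor <;> linarith
  refine ⟨resample w v R, isProbWeights_resample hw hR (fun f => (hR₀₁ f).1) fun f => (hR₀₁ f).2,
    fun X hX => sum_resample_mul_of_update hR hX, ?_, ?_⟩
  · have hwR : ∀ f, w f * R f = β * w f + (α - β) * (w f * coord f u) := fun f => by ring
    have h := sum_resample_mul_coord_mul (w := w) hR (Y := fun _ => 1) fun _ _ => rfl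
    simp only [mul_one] at h
    rw [h, sum_congr rfl fun f _ => hwR f, sum_add_distrib, ← mul_sum, ← mul_sum, hw.2]
    linear_combination hαc + hβc
  · have hwR : ∀ f, w f * (R f * coord f u) = α * (w f * coord f u) := fun f => by
      simp only [R, coord]; split_ifs <;> ring
    rw [sum_resample_mul_coord_mul hR fun f b => coord_update_of_ne huv f b,
      sum_congr rfl fun f _ => hwR f, ← mul_sum, hαc]

theorem exists_isProbWeights_coord_eq (p : V → ℝ) (hp : ∀ i, 0 ≤ p i ∧ p i ≤ 1) :
    ∃ w, IsProbWeights w ∧ ∀ i, ∑ f, w f * coord f i = p i := by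
  suffices ∀ T : Finset V, ∃ w, IsProbWeights w ∧ ∀ i ∈ T, ∑ f, w f * coord f i = p i by
    simpa using this univ
  intro T
  induction T using Finset.induction_on with
  | empty =>
    exact ⟨fun f => if f = fun _ => false then 1 else 0,
      ⟨fun f => by dsimp only; split_ifs <;> norm_num, by simp⟩, by simp⟩
  | insert a T ha ih =>
    obtain ⟨w, hw, hT⟩ := ih
    obtain ⟨w', hw', hpres, ha'⟩ := exists_resample_coord hw a (hp a).1 (hp a).2
    refine ⟨w', hw', fun i hi => ?_⟩
    rcases eq_or_ne i a with rfl | hia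
    · exact ha'
    · rw [hpres _ (coord_update_of_ne hia), hT i ((mem_insert.1 hi).resolve_left hia)]

theorem exists_isProbWeights_coord_eq_of_parent (p : V → ℝ) (hp : ∀ i, 0 ≤ p i ∧ p i ≤ 1)
    (π : V → V) (d : V → ℕ) (c : V → ℝ) (S : Finset V) (hd : ∀ v ∈ S, d (π v) < d v)
    (hc : ∀ v ∈ S, max 0 (p v + p (π v) - 1) ≤ c v ∧ c v ≤ min (p v) (p (π v))) :
    ∃ w, IsProbWeights w ∧ (∀ i, ∑ f, w f * coord f i = p i) ∧
      ∀ v ∈ S, ∑ f, w f * (coord f v * coord f (π v)) = c v := by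
  induction S using Finset.induction_on_max_value d with
  | empty => simpa using exists_isProbWeights_coord_eq p hp
  | insert a S ha hmax ih =>
    obtain ⟨w, hw, hmarg, hcorr⟩ := ih (fun v hv => hd v (mem_insert_of_mem hv))
      (fun v hv => hc v (mem_insert_of_mem hv))
    have hπa : π a ≠ a := ne_of_apply_ne d (hd a (mem_insert_self a S)).ne
    obtain ⟨w', hw', hpres, hmarg_a, hcorr_a⟩ := exists_resample_correlated hw hπa
      (by rw [hmarg]; exact (hp _).1) (by rw [hmarg]; exact (hp _).2)
      (by rw [hmarg]; exact hc a (mem_insert_self a S))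
    refine ⟨w', hw', fun i => ?_, fun v hv => ?_⟩
    · rcases eq_or_ne i a with rfl | hia
      · exact hmarg_a
      · rw [hpres _ (coord_update_of_ne hia), hmarg]
    · rcases mem_insert.1 hv with rfl | hvS
      · exact hcorr_a
      · have hva : v ≠ a := ne_of_mem_of_not_mem hvS ha
        have hπva : π v ≠ a :=
          ne_of_apply_ne d ((hd v (mem_insert_of_mem hvS)).trans_le (hmax v hvS)).ne
        rw [hpres _ fun f b => by rw [coord_update_of_ne hva, coord_update_of_ne hπva],
          hcorr v hvS]

theorem mem_cor_of_isProbWeights {G : SimpleGraph V} {w : (V → Bool) → ℝ} (hw : IsProbWeights w)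
    {p : V → ℝ} {q : G.edgeSet → ℝ} (hp : ∀ i, ∑ f, w f * coord f i = p i)
    (hq : ∀ i j (h : G.Adj i j), ∑ f, w f * (coord f i * coord f j) = q ⟨s(i, j), h⟩) :
    (p, q) ∈ cor G := by
  have hsum : ∑ f, w f • corPoint G f = (p, q) := by
    ext i
    · simp [Prod.fst_sum, Finset.sum_apply, corPoint, ← hp i, coord]
    · obtain ⟨e, he⟩ := i
      induction e using Sym2.ind with
      | _ i j => simp [Prod.snd_sum, Finset.sum_apply, corPoint, ← hq i j he, coord]
  rw [← hsum]
  exact (convex_convexHull ℝ _).sum_mem (fun f _ => hw.1 f) hw.2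
    fun f _ => subset_convexHull ℝ _ (Set.mem_range_self f)

end CorrelationPolytope

namespace SimpleGraph

/-- `π v` is the neighbour of `v` on its path to `r`, and `d v` the length of that path. -/
theorem IsTree.exists_parent {V : Type} {G : SimpleGraph V} (hG : G.IsTree) (r : V) :
    ∃ (π : V → V) (d : V → ℕ), (∀ v, v ≠ r → G.Adj v (π v) ∧ d (π v) < d v) ∧
      ∀ ⦃i j⦄, G.Adj i j → i ≠ r ∧ j = π i ∨ j ≠ r ∧ i = π j := by
  choose P hP huniq using hG.existsUnique_path r
  refine ⟨fun v => (P v).penultimate, fun v => (P v).length, fun v hv => ?_, fun i j hij => ?_⟩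
  · have hadj := (P v).adj_penultimate (Walk.not_nil_of_ne hv.symm)
    refine ⟨hadj.symm, ?_⟩
    dsimp only
    rw [← huniq _ _ (hP v).dropLast]
    have hlen := congrArg Walk.length (Walk.concat_dropLast hadj)
    rw [Walk.length_concat] at hlen
    omega
  · by_cases hj : j ∈ (P i).support
    · refine Or.inl ⟨?_, hG.isAcyclic.eq_penultimate_of_adj_end (hP i) hij hj⟩
      rintro rfl
      rw [← huniq _ _ Walk.IsPath.nil] at hj
      simp only [Walk.support_nil, List.mem_singleton] at hj
      exact hij.ne hj.symm
    · refine Or.inr ⟨fun hjr => hj (hjr ▸ (P i).start_mem_support), ?_⟩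
      dsimp only
      rw [← huniq _ _ ((hP i).concat hj hij), Walk.penultimate_concat]

end SimpleGraph

open CorrelationPolytope

/-- If `G` is a tree then `TRA(G) ⊆ COR(G)` (and hence they are equal, by the reverse
inclusion which always holds): any `(p, q)` satisfying the transportation inequalities lies
in the correlation polytope. -/
theorem stmt2 {V : Type} [Fintype V] [DecidableEq V] (G : SimpleGraph V)
    (hG : G.IsTree) (p : V → ℝ) (q : G.edgeSet → ℝ)
    (hp : ∀ i : V, 0 ≤ p i ∧ p i ≤ 1)
    (hq : ∀ (e : G.edgeSet) (i j : V), (e : Sym2 V) = s(i, j) →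
      max 0 (p i + p j - 1) ≤ q e ∧ q e ≤ min (p i) (p j)) :
    (p, q) ∈ cor G := by
  classical
  obtain ⟨r⟩ : Nonempty V := hG.connected.nonempty
  obtain ⟨π, d, hπ, hedge⟩ := hG.exists_parent r
  let c : V → ℝ := fun v => if h : G.Adj v (π v) then q ⟨s(v, π v), h⟩ else 0
  have hc (v) (hv : v ∈ univ.erase r) :
      max 0 (p v + p (π v) - 1) ≤ c v ∧ c v ≤ min (p v) (p (π v)) := by
    have hadj := (hπ v (ne_of_mem_erase hv)).1
    simpa [c, hadj] using hq ⟨s(v, π v), hadj⟩ v (π v) rfl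
  obtain ⟨w, hw, hmarg, hcorr⟩ := exists_isProbWeights_coord_eq_of_parent p hp π d c _
    (fun v hv => (hπ v (ne_of_mem_erase hv)).2) hc
  refine mem_cor_of_isProbWeights hw hmarg fun i j hij => ?_
  rcases hedge hij with ⟨hi, rfl⟩ | ⟨hj, rfl⟩
  · simpa [c, hij] using hcorr i (mem_erase.2 ⟨hi, mem_univ i⟩)
  · simp_rw [mul_comm (coord _ (π j))]
    simpa [c, hij.symm, Sym2.eq_swap] using hcorr j (mem_erase.2 ⟨hj, mem_univ j⟩)
end
end

section
/- Let G=(V,E) be a finite simple graph. Then COR(G) = TRA(G) if and only if G is acyclic, i.e., a forest. -/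
noncomputable section

/-- The transportation body `TRA(G)` of a graph `G`. -/
def tra {V : Type} (G : SimpleGraph V) : Set ((V → ℝ) × (G.edgeSet → ℝ)) :=
  {pq | (∀ i : V, 0 ≤ pq.1 i ∧ pq.1 i ≤ 1) ∧
    ∀ (e : G.edgeSet) (i j : V), (e : Sym2 V) = s(i, j) →
      max 0 (pq.1 i + pq.1 j - 1) ≤ pq.2 e ∧ pq.2 e ≤ min (pq.1 i) (pq.1 j)}

/-!
`COR(G) ⊆ TRA(G)` always: the vertices `corPoint G f` satisfy the transportation inequalities,
which cut out a convex set.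

If `G` has a cycle, pick one of its edges `uv` and a `u`–`v` walk avoiding it. A `0/1` point cuts
`uv` only if it cuts some edge of the walk, so the linear inequality
`cut(uv) ≤ ∑ cut(e)`, where `cut(ij) = p i + p j - 2 q ij`, is valid on `COR(G)`. The point of
`TRA(G)` with all values `1/2`, except `0` on `uv`, violates it.

If `G` is a forest, `(p, q) ∈ TRA(G)` is written as the moments of a probability distribution on
`{0,1}^V`, by induction on the number of edges: delete a pendant edge `uv` with leaf `v`, realize
the rest, and redraw the bit at `v` conditionally on the bit at `u` according to the `2 × 2` table
given by `p u`, `p v`, `q uv`. With no edges, the product of Bernoulli distributions works.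
-/

open Finset

namespace Correlation

variable {V : Type} {G : SimpleGraph V}

def ind (b : Bool) : ℝ := if b then 1 else 0

@[simp] lemma ind_true : ind true = 1 := rfl
@[simp] lemma ind_false : ind false = 0 := rfl

lemma corPoint_fst (f : V → Bool) (i : V) : (corPoint G f).1 i = ind (f i) := rfl

lemma corPoint_snd (f : V → Bool) {e : G.edgeSet} {i j : V} (h : (e : Sym2 V) = s(i, j)) :
    (corPoint G f).2 e = ind (f i) * ind (f j) := by
  simp only [corPoint, h, Sym2.lift_mk, ind]

lemma corPoint_mem_tra (f : V → Bool) : corPoint G f ∈ tra G := by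
  refine ⟨fun i => ?_, fun e i j h => ?_⟩
  · rw [corPoint_fst]
    cases f i <;> norm_num
  · rw [corPoint_snd f h, corPoint_fst, corPoint_fst]
    cases f i <;> cases f j <;> norm_num

lemma convex_tra : Convex ℝ (tra G) := by
  intro x hx y hy a b ha hb hab
  refine ⟨fun i => ?_, fun e i j h => ?_⟩
  · obtain ⟨hx0, hx1⟩ := hx.1 i
    obtain ⟨hy0, hy1⟩ := hy.1 i
    simp only [Prod.fst_add, Prod.smul_fst, Pi.add_apply, Pi.smul_apply, smul_eq_mul]
    constructor <;> nlinarith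
  · have hx' := hx.2 e i j h
    have hy' := hy.2 e i j h
    simp only [max_le_iff, le_min_iff] at hx' hy' ⊢
    simp only [Prod.fst_add, Prod.smul_fst, Prod.snd_add, Prod.smul_snd, Pi.add_apply,
      Pi.smul_apply, smul_eq_mul]
    refine ⟨⟨?_, ?_⟩, ?_, ?_⟩ <;> nlinarith

lemma cor_subset_tra : cor G ⊆ tra G :=
  convexHull_min (Set.range_subset_iff.2 corPoint_mem_tra) convex_tra

/-- At a vertex `corPoint G f` of `COR(G)`, `cutValue d` is the indicator that `f` separates the
endpoints of `d`. -/
def cutValue (d : G.Dart) : ((V → ℝ) × (G.edgeSet → ℝ)) →ₗ[ℝ] ℝ where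
  toFun x := x.1 d.fst + x.1 d.snd - 2 * x.2 ⟨d.edge, d.edge_mem⟩
  map_add' x y := by simp only [Prod.fst_add, Prod.snd_add, Pi.add_apply]; ring
  map_smul' c x := by
    simp only [Prod.smul_fst, Prod.smul_snd, Pi.smul_apply, smul_eq_mul, RingHom.id_apply]; ring

lemma cutValue_apply (d : G.Dart) (x : (V → ℝ) × (G.edgeSet → ℝ)) :
    cutValue d x = x.1 d.fst + x.1 d.snd - 2 * x.2 ⟨d.edge, d.edge_mem⟩ := rfl

lemma cutValue_corPoint (d : G.Dart) (f : V → Bool) :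
    cutValue d (corPoint G f) = if f d.fst = f d.snd then 0 else 1 := by
  rw [cutValue_apply, corPoint_fst, corPoint_fst, corPoint_snd f rfl]
  cases f d.fst <;> cases f d.snd <;> norm_num

section Cuts

variable [DecidableEq V]

lemma cutValue_le_sum_of_mem_cor (d₀ : G.Dart) (p : G.Walk d₀.fst d₀.snd) {x} (hx : x ∈ cor G) :
    cutValue d₀ x ≤ ∑ d ∈ p.darts.toFinset, cutValue d x := by
  let L := cutValue d₀ - ∑ d ∈ p.darts.toFinset, cutValue d
  suffices L x ≤ 0 by
    simpa [L, LinearMap.sub_apply, LinearMap.sum_apply] using this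
  refine convexHull_min ?_ (convex_halfSpace_le L.isLinear 0) hx
  rintro _ ⟨f, rfl⟩
  have hnonneg : ∀ d : G.Dart, 0 ≤ cutValue d (corPoint G f) := fun d => by
    rw [cutValue_corPoint]; split_ifs <;> norm_num
  suffices cutValue d₀ (corPoint G f) ≤ ∑ d ∈ p.darts.toFinset, cutValue d (corPoint G f) by
    simpa [L, LinearMap.sub_apply, LinearMap.sum_apply] using this
  rw [cutValue_corPoint]
  split_ifs with hf
  · exact sum_nonneg fun d _ => hnonneg d
  · obtain ⟨d, hd, hfst, hsnd⟩ : ∃ d ∈ p.darts, f d.fst = f d₀.fst ∧ f d.snd ≠ f d₀.fst :=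
      p.exists_boundary_dart {i | f i = f d₀.fst} rfl (Ne.symm hf)
    calc (1 : ℝ) = cutValue d (corPoint G f) := by
          rw [cutValue_corPoint, if_neg fun h => hsnd (h.symm.trans hfst)]
      _ ≤ _ := single_le_sum (fun d _ => hnonneg d) (List.mem_toFinset.2 hd)

def halfPoint (e₀ : Sym2 V) : (V → ℝ) × (G.edgeSet → ℝ) :=
  (fun _ => 1 / 2, fun e => if (e : Sym2 V) = e₀ then 0 else 1 / 2)

lemma halfPoint_mem_tra (e₀ : Sym2 V) : halfPoint (G := G) e₀ ∈ tra G := by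
  refine ⟨fun i => by norm_num [halfPoint], fun e i j _ => ?_⟩
  simp only [halfPoint]
  split_ifs <;> norm_num

lemma cutValue_halfPoint (d : G.Dart) (e₀ : Sym2 V) :
    cutValue d (halfPoint e₀) = if d.edge = e₀ then 1 else 0 := by
  simp only [cutValue_apply, halfPoint]
  split_ifs <;> norm_num

lemma cor_ne_tra_of_not_isAcyclic (hG : ¬ G.IsAcyclic) : cor G ≠ tra G := by
  obtain ⟨u, v, huv, hbridge⟩ : ∃ u v, G.Adj u v ∧ ¬ G.IsBridge s(u, v) := by
    simpa [SimpleGraph.isAcyclic_iff_forall_adj_isBridge] using hG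
  obtain ⟨p, hp⟩ : ∃ p : G.Walk u v, s(u, v) ∉ p.edges := by
    simpa [SimpleGraph.isBridge_iff_forall_walk_mem_edges] using hbridge
  let d₀ : G.Dart := ⟨(u, v), huv⟩
  intro hcor
  have hx := cutValue_le_sum_of_mem_cor d₀ p (hcor ▸ halfPoint_mem_tra d₀.edge)
  have hzero : ∀ d ∈ p.darts.toFinset, cutValue d (halfPoint d₀.edge) = 0 := fun d hd => by
    rw [cutValue_halfPoint, if_neg]
    intro h
    have hmem : d.edge ∈ p.edges := List.mem_map_of_mem (List.mem_toFinset.1 hd)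
    rw [h] at hmem
    exact hp hmem
  rw [sum_eq_zero hzero, cutValue_halfPoint, if_pos rfl] at hx
  norm_num at hx

end Cuts

lemma _root_.SimpleGraph.IsAcyclic.exists_adj_forall_adj_eq [Finite V] (hG : G.IsAcyclic)
    {a b : V} (hab : G.Adj a b) : ∃ u v, G.Adj u v ∧ ∀ x, G.Adj v x → x = u := by
  have : Nonempty V := ⟨a⟩
  obtain ⟨v, _, p, hp, hmax⟩ := SimpleGraph.Walk.exists_isPath_forall_isPath_length_le_length G
  have hnil : ¬ p.Nil := fun hnil => by
    simpa [hnil.length_eq_zero] using hmax _ _ _ (SimpleGraph.Path.singleton hab).isPath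
  refine ⟨p.snd, v, (p.adj_snd hnil).symm, fun x hx => hG.eq_snd_of_adj_start hp hx ?_⟩
  by_contra hx'
  simpa using hmax _ _ (p.cons hx.symm) (hp.cons hx')

section Moments

variable [Fintype V] [DecidableEq V]

/-- Weights `w` of a convex combination of the points `corPoint G f` that equals `(p, q)`. The edge
values `q` live on all of `Sym2 V`, so that the notion survives deleting edges from `G`. -/
structure HasMoments (G : SimpleGraph V) (p : V → ℝ) (q : Sym2 V → ℝ) (w : (V → Bool) → ℝ) :
    Prop where
  nonneg : ∀ f, 0 ≤ w f
  sum_eq_one : ∑ f, w f = 1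
  vertex : ∀ i, ∑ f, w f * ind (f i) = p i
  edge : ∀ i j, G.Adj i j → ∑ f, w f * (ind (f i) * ind (f j)) = q s(i, j)

lemma HasMoments.mem_cor {p : V → ℝ} {q : Sym2 V → ℝ} {w : (V → Bool) → ℝ}
    (h : HasMoments G p q w) : (p, fun e : G.edgeSet => q e) ∈ cor G := by
  have hsum : ∑ f, w f • corPoint G f = (p, fun e : G.edgeSet => q e) := by
    ext i
    · simp only [Prod.fst_sum, Finset.sum_apply, Prod.smul_fst, Pi.smul_apply, smul_eq_mul,
        corPoint_fst, h.vertex]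
    · obtain ⟨e, he⟩ := i
      induction e using Sym2.ind with
      | h i j =>
        simp only [Prod.snd_sum, Finset.sum_apply, Prod.smul_snd, Pi.smul_apply, smul_eq_mul,
          corPoint_snd _ (rfl : ((⟨s(i, j), he⟩ : G.edgeSet) : Sym2 V) = s(i, j)), h.edge i j he]
  rw [← hsum]
  exact (convex_convexHull ℝ _).sum_mem (fun f _ => h.nonneg f) h.sum_eq_one
    fun f _ => subset_convexHull ℝ _ ⟨f, rfl⟩

def bern (a : ℝ) (b : Bool) : ℝ := if b then a else 1 - a

lemma bern_nonneg {a : ℝ} (ha : a ∈ Set.Icc 0 1) (b : Bool) : 0 ≤ bern a b := by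
  cases b
  exacts [sub_nonneg.2 ha.2, ha.1]

lemma sum_bern (a : ℝ) : ∑ b, bern a b = 1 := by simp [bern]

lemma sum_bern_mul_ind (a : ℝ) : ∑ b, bern a b * ind b = a := by simp [bern]

lemma hasMoments_prod_bern {p : V → ℝ} (q : Sym2 V → ℝ) (hp : ∀ i, p i ∈ Set.Icc 0 1)
    (hG : ∀ i j, ¬ G.Adj i j) : HasMoments G p q fun f => ∏ i, bern (p i) (f i) := by
  refine ⟨fun f => prod_nonneg fun i _ => bern_nonneg (hp i) _, ?_, fun i => ?_,
    fun i j h => absurd h (hG i j)⟩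
  · rw [← Fintype.prod_sum]
    simp only [sum_bern, prod_const_one]
  · calc ∑ f : V → Bool, (∏ j, bern (p j) (f j)) * ind (f i)
        = ∑ f : V → Bool, ∏ j, bern (p j) (f j) * (if j = i then ind (f j) else 1) := by
          refine sum_congr rfl fun f _ => ?_
          rw [prod_mul_distrib, Fintype.prod_ite_eq']
      _ = ∏ j, ∑ b, bern (p j) b * (if j = i then ind b else 1) :=
          (Fintype.prod_sum fun j b => bern (p j) b * (if j = i then ind b else 1)).symm
      _ = ∏ j, if j = i then p j else 1 :=
          prod_congr rfl fun j _ => by split_ifs <;> simp only [mul_one, sum_bern_mul_ind, sum_bern]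
      _ = p i := Fintype.prod_ite_eq' i p

/-- Redraw the value at `v` from the Bernoulli distribution with parameter `π (f u)`, which
depends on the current value at `u`. -/
def resample (w : (V → Bool) → ℝ) (v u : V) (π : Bool → ℝ) (g : V → Bool) : ℝ :=
  ∑ f, ∑ b, if Function.update f v b = g then w f * bern (π (f u)) b else 0

variable {w : (V → Bool) → ℝ} {v u : V} {π : Bool → ℝ}

lemma sum_resample_mul (φ : (V → Bool) → ℝ) :
    ∑ g, resample w v u π g * φ g =
      ∑ f, w f * ∑ b, bern (π (f u)) b * φ (Function.update f v b) := by
  simp only [resample, sum_mul, ite_mul, zero_mul]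
  rw [sum_comm]
  refine sum_congr rfl fun f _ => ?_
  rw [sum_comm, mul_sum]
  simp only [sum_ite_eq, mem_univ, if_true, mul_assoc]

lemma resample_nonneg (hw : ∀ f, 0 ≤ w f) (hπ : ∀ b, π b ∈ Set.Icc 0 1) (g : V → Bool) :
    0 ≤ resample w v u π g :=
  sum_nonneg fun f _ => sum_nonneg fun b _ => by
    split_ifs
    exacts [mul_nonneg (hw f) (bern_nonneg (hπ _) b), le_rfl]

lemma sum_resample_mul_of_forall_update {φ : (V → Bool) → ℝ}
    (hφ : ∀ f b, φ (Function.update f v b) = φ f) :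
    ∑ g, resample w v u π g * φ g = ∑ f, w f * φ f := by
  simp only [sum_resample_mul, hφ, ← sum_mul, sum_bern, one_mul]

lemma sum_resample : ∑ g, resample w v u π g = ∑ f, w f := by
  simpa using sum_resample_mul_of_forall_update (w := w) (v := v) (u := u) (π := π)
    (φ := fun _ => 1) fun _ _ => rfl

lemma sum_resample_mul_ind_self :
    ∑ g, resample w v u π g * ind (g v) = ∑ f, w f * π (f u) := by
  simp only [sum_resample_mul, Function.update_self, sum_bern_mul_ind]

lemma sum_resample_mul_ind_mul_ind_self (huv : u ≠ v) :
    ∑ g, resample w v u π g * (ind (g u) * ind (g v)) = ∑ f, w f * (ind (f u) * π (f u)) := by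
  rw [sum_resample_mul]
  refine sum_congr rfl fun f _ => ?_
  simp only [Function.update_of_ne huv, Function.update_self, mul_left_comm (bern _ _),
    ← mul_sum, sum_bern_mul_ind]

lemma apply_eq_ind_mul_add (π : Bool → ℝ) (b : Bool) :
    π b = ind b * π true + (1 - ind b) * π false := by
  cases b <;> simp

lemma sum_mul_apply_eq {a : ℝ} (h1 : ∑ f, w f = 1) (hu : ∑ f, w f * ind (f u) = a) :
    ∑ f, w f * π (f u) = a * π true + (1 - a) * π false := by
  calc ∑ f, w f * π (f u)
      = ∑ f, (π true * (w f * ind (f u)) + π false * (w f - w f * ind (f u))) :=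
        sum_congr rfl fun f _ => by rw [apply_eq_ind_mul_add π (f u)]; ring
    _ = a * π true + (1 - a) * π false := by
        rw [sum_add_distrib, ← mul_sum, ← mul_sum, sum_sub_distrib, h1, hu]
        ring

lemma sum_mul_ind_mul_apply_eq {a : ℝ} (hu : ∑ f, w f * ind (f u) = a) :
    ∑ f, w f * (ind (f u) * π (f u)) = a * π true := by
  rw [← hu, sum_mul]
  refine sum_congr rfl fun f _ => ?_
  cases f u <;> simp

/-- `π s` is the conditional probability of `1` in the second coordinate given `s` in the first,
for the `2 × 2` table of a pair of bits with marginals `a`, `b` and joint moment `c`. -/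
lemma exists_conditional {a b c : ℝ} (ha : a ∈ Set.Icc 0 1)
    (hc : max 0 (a + b - 1) ≤ c ∧ c ≤ min a b) :
    ∃ π : Bool → ℝ, (∀ s, π s ∈ Set.Icc 0 1) ∧ a * π true = c ∧ (1 - a) * π false = b - c := by
  obtain ⟨ha0, ha1⟩ := ha
  simp only [max_le_iff, le_min_iff] at hc
  obtain ⟨⟨hc0, hcab⟩, hca, hcb⟩ := hc
  refine ⟨fun s => if s then c / a else (b - c) / (1 - a), fun s => ?_, ?_, ?_⟩
  · cases s
    · exact ⟨div_nonneg (by linarith) (by linarith), div_le_one_of_le₀ (by linarith) (by linarith)⟩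
    · exact ⟨div_nonneg hc0 ha0, div_le_one_of_le₀ hca ha0⟩
  -- division by zero is harmless: `a = 0` forces `c = 0`, and `a = 1` forces `c = b`
  · exact mul_div_cancel_of_imp' fun h => by linarith
  · exact mul_div_cancel_of_imp' fun h => by linarith

theorem HasMoments.of_deleteEdges_pendant {p : V → ℝ} {q : Sym2 V → ℝ} (huv : G.Adj u v)
    (hleaf : ∀ x, G.Adj v x → x = u) (hpu : p u ∈ Set.Icc 0 1)
    (hq : max 0 (p u + p v - 1) ≤ q s(u, v) ∧ q s(u, v) ≤ min (p u) (p v))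
    (h : HasMoments (G.deleteEdges {s(u, v)}) p q w) :
    ∃ w', HasMoments G p q w' := by
  obtain ⟨π, hπ, hπu, hπv⟩ := exists_conditional hpu hq
  refine ⟨resample w v u π, resample_nonneg h.nonneg hπ, sum_resample.trans h.sum_eq_one,
    fun i => ?_, fun i j hij => ?_⟩
  · rcases eq_or_ne i v with rfl | hi
    · rw [sum_resample_mul_ind_self, sum_mul_apply_eq h.sum_eq_one (h.vertex u)]
      linarith
    · rw [sum_resample_mul_of_forall_update fun f b => by rw [Function.update_of_ne hi], h.vertex]
  · by_cases he : s(i, j) = s(u, v)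
    · have hpendant : ∑ g, resample w v u π g * (ind (g u) * ind (g v)) = q s(u, v) := by
        rw [sum_resample_mul_ind_mul_ind_self huv.ne, sum_mul_ind_mul_apply_eq (h.vertex u), hπu]
      rcases Sym2.eq_iff.1 he with ⟨rfl, rfl⟩ | ⟨rfl, rfl⟩
      · exact hpendant
      · simpa [mul_comm, Sym2.eq_swap] using hpendant
    · have hi : i ≠ v := fun hi => he (by rw [hi, hleaf j (hi ▸ hij), Sym2.eq_swap])
      have hj : j ≠ v := fun hj => he (by rw [hj, hleaf i (hj ▸ hij.symm)])
      rw [sum_resample_mul_of_forall_update fun f b => by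
        rw [Function.update_of_ne hi, Function.update_of_ne hj]]
      exact h.edge i j (SimpleGraph.deleteEdges_adj.2 ⟨hij, he⟩)

theorem _root_.SimpleGraph.IsAcyclic.exists_hasMoments (hG : G.IsAcyclic) {p : V → ℝ}
    {q : Sym2 V → ℝ} (hp : ∀ i, p i ∈ Set.Icc 0 1)
    (hq : ∀ i j, G.Adj i j → max 0 (p i + p j - 1) ≤ q s(i, j) ∧ q s(i, j) ≤ min (p i) (p j)) :
    ∃ w, HasMoments G p q w := by
  induction hn : G.edgeSet.ncard generalizing G with
  | zero =>
    have hE : G.edgeSet = ∅ := (Set.ncard_eq_zero).1 hn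
    exact ⟨_, hasMoments_prod_bern q hp fun i j hij =>
      (Set.eq_empty_iff_forall_notMem.1 hE) s(i, j) hij⟩
  | succ n ih =>
    obtain ⟨a, b, hab⟩ : ∃ a b, G.Adj a b := by
      rw [← SimpleGraph.ne_bot_iff_exists_adj, ← SimpleGraph.edgeSet_nonempty]
      exact Set.nonempty_of_ncard_ne_zero (by omega)
    obtain ⟨u, v, huv, hleaf⟩ := hG.exists_adj_forall_adj_eq hab
    have hn' : (G.deleteEdges {s(u, v)}).edgeSet.ncard = n := by
      rw [SimpleGraph.edgeSet_deleteEdges, Set.ncard_sdiff_singleton_of_mem (G.mem_edgeSet.2 huv), hn]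
      rfl
    obtain ⟨w, hw⟩ := ih (hG.anti (G.deleteEdges_le _))
      (fun i j hij => hq i j (SimpleGraph.deleteEdges_adj.1 hij).1) hn'
    exact hw.of_deleteEdges_pendant huv hleaf (hp u) (hq u v huv)

end Moments

lemma tra_subset_cor [Fintype V] (hG : G.IsAcyclic) : tra G ⊆ cor G := by
  classical
  rintro ⟨p, q⟩ ⟨hp, hq⟩
  let Q : Sym2 V → ℝ := fun z => if h : z ∈ G.edgeSet then q ⟨z, h⟩ else 0
  obtain ⟨w, hw⟩ := hG.exists_hasMoments (q := Q) hp fun i j hij => by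
    simpa [Q, dif_pos hij] using hq ⟨s(i, j), hij⟩ i j rfl
  have hQ : (fun e : G.edgeSet => Q e) = q := funext fun e => by simp [Q]
  simpa [hQ] using hw.mem_cor

end Correlation

/-- `COR(G) = TRA(G)` if and only if `G` is acyclic (a forest). -/
theorem stmt3 {V : Type} [Fintype V] [DecidableEq V] (G : SimpleGraph V) :
    cor G = tra G ↔ G.IsAcyclic :=
  ⟨not_imp_not.1 Correlation.cor_ne_tra_of_not_isAcyclic,
    fun hG => Correlation.cor_subset_tra.antisymm (Correlation.tra_subset_cor hG)⟩
end
end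

section
/- Let G=(V,E) be a finite simple graph. There exist a real number τ with 0 < τ ≤ 1/2 and a constant c ≥ 0 such that for all t ∈ (0,τ), the Lebesgue volume of the slice L_t(G) := {q ∈ ℝ^E : (t·𝟙, q) ∈ COR(G)} (where t·𝟙 is the constant function t on V) equals c · t^{|E|}. Equivalently, since the slice {q ∈ ℝ^E : (t·𝟙, q) ∈ TRA(G)} is the cube [0,t]^E of volume t^{|E|} for t ≤ 1/2, the volume ratio vol(L_t(G))/vol(N_t(G)) is constant on the nonempty interval (0,τ). -/
open MeasureTheory Pointwise

noncomputable section

namespace CorAux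

variable {V : Type} [Fintype V] [DecidableEq V] (G : SimpleGraph V) [DecidableRel G.Adj]

lemma corPoint_false : corPoint G (fun _ => false) = 0 := by
  unfold corPoint
  refine Prod.ext ?_ ?_
  · funext i; simp
  · funext e
    obtain ⟨e, he⟩ := e
    induction e using Sym2.ind with
    | _ i j => simp

lemma corPoint_fst_mem (f : V → Bool) (i : V) :
    (corPoint G f).1 i = 0 ∨ (corPoint G f).1 i = 1 := by
  unfold corPoint; by_cases h : f i <;> simp [h]

lemma corPoint_fst_nonneg (f : V → Bool) (i : V) : 0 ≤ (corPoint G f).1 i := by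
  rcases corPoint_fst_mem G f i with h | h <;> rw [h] <;> norm_num

lemma corPoint_eq_zero (f : V → Bool) (h : ∀ i, (corPoint G f).1 i = 0) :
    corPoint G f = 0 := by
  have hf : f = fun _ => false := by
    funext i
    have hi := h i
    unfold corPoint at hi
    by_cases hfi : f i
    · simp [hfi] at hi
    · simp [hfi]
  rw [hf]; exact corPoint_false G

lemma zero_mem_range : (0 : (V → ℝ) × (G.edgeSet → ℝ)) ∈ Set.range (corPoint G) :=
  ⟨fun _ => false, corPoint_false G⟩

/-- Key scaling lemma: if `x ∈ COR(G)` has all vertex marginals equal to `t` and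
`s * (|V| * t) ≤ 1` with `s ≥ 0`, then `s • x ∈ COR(G)`. -/
lemma key_smul_mem {t s : ℝ} (hs : 0 ≤ s) (hst : s * ((Fintype.card V : ℝ) * t) ≤ 1)
    {x : (V → ℝ) × (G.edgeSet → ℝ)} (hx : x ∈ cor G) (hx1 : ∀ i, x.1 i = t) :
    s • x ∈ cor G := by
  classical
  rw [cor, mem_convexHull_iff_exists_fintype] at hx
  obtain ⟨ι, _, w, z, hw0, hw1, hz, hxe⟩ := hx
  choose g hg using hz
  -- indicator of "z i is nonzero"
  set χ : ι → ℝ := fun i => if (∀ j, (z i).1 j = 0) then 0 else 1 with hχdef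
  have hχ0 : ∀ i, 0 ≤ χ i := by
    intro i; by_cases h : ∀ j, (z i).1 j = 0 <;> simp [hχdef, h]
  have hznn : ∀ i j, 0 ≤ (z i).1 j := by
    intro i j; rw [← hg i]; exact corPoint_fst_nonneg G _ j
  have hχ_le : ∀ i, χ i ≤ ∑ j, (z i).1 j := by
    intro i
    by_cases h : ∀ j, (z i).1 j = 0
    · have hnn : (0:ℝ) ≤ ∑ j, (z i).1 j := Finset.sum_nonneg fun j _ => hznn i j
      simp only [hχdef, if_pos h]
      exact hnn
    · push_neg at h
      obtain ⟨j, hj⟩ := h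
      have h1 : (z i).1 j = 1 := by
        have := corPoint_fst_mem G (g i) j
        rw [hg i] at this
        tauto
      have : (1 : ℝ) ≤ ∑ j', (z i).1 j' := by
        calc (1 : ℝ) = (z i).1 j := h1.symm
        _ ≤ ∑ j', (z i).1 j' :=
          Finset.single_le_sum (fun j' _ => hznn i j') (Finset.mem_univ j)
      have hne : ¬ ∀ j', (z i).1 j' = 0 := fun hh => hj (hh j)
      simpa [hχdef, hne] using this
  -- vertex-marginal sum identity
  have hfst : ∀ j, ∑ i, w i * (z i).1 j = t := by
    intro j
    have h1 : x.1 j = t := hx1 j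
    rw [← hxe] at h1
    simp only [Prod.fst_sum, Prod.smul_fst, Finset.sum_apply, Pi.smul_apply,
      smul_eq_mul] at h1
    exact h1
  have hsum : ∑ i, w i * (∑ j, (z i).1 j) = (Fintype.card V : ℝ) * t := by
    calc ∑ i, w i * (∑ j, (z i).1 j) = ∑ i, ∑ j, w i * (z i).1 j := by
          simp [Finset.mul_sum]
    _ = ∑ j, ∑ i, w i * (z i).1 j := Finset.sum_comm
    _ = ∑ _j : V, t := by simp [hfst]
    _ = (Fintype.card V : ℝ) * t := by simp [mul_comm]
  have hχw : ∑ i, w i * χ i ≤ (Fintype.card V : ℝ) * t := by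
    rw [← hsum]
    exact Finset.sum_le_sum fun i _ => mul_le_mul_of_nonneg_left (hχ_le i) (hw0 i)
  -- new weights on `Option ι`
  set w' : Option ι → ℝ := fun o => o.elim (1 - s * ∑ i, w i * χ i) (fun i => s * (w i * χ i))
  set z' : Option ι → (V → ℝ) × (G.edgeSet → ℝ) := fun o => o.elim 0 z
  have hw'0 : ∀ o, 0 ≤ w' o := by
    rintro (_ | i)
    · have : s * ∑ i, w i * χ i ≤ 1 :=
        le_trans (mul_le_mul_of_nonneg_left hχw hs) hst
      simpa [w'] using sub_nonneg.2 this
    · exact mul_nonneg hs (mul_nonneg (hw0 i) (hχ0 i))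
  have hw'1 : ∑ o, w' o = 1 := by
    rw [Fintype.sum_option]
    simp [w', Finset.mul_sum]
  have hz' : ∀ o, z' o ∈ Set.range (corPoint G) := by
    rintro (_ | i)
    · exact zero_mem_range G
    · exact ⟨g i, hg i⟩
  have hterm : ∀ i, (s * (w i * χ i)) • z i = s • (w i • z i) := by
    intro i
    by_cases h : ∀ j, (z i).1 j = 0
    · have hz0 : z i = 0 := by
        rw [← hg i]; exact corPoint_eq_zero G _ (by rw [hg i]; exact h)
      simp [hz0]
    · simp [hχdef, h, mul_smul]
  have hxe' : ∑ o, w' o • z' o = s • x := by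
    rw [Fintype.sum_option]
    have h2 : ∀ i : ι, w' (some i) • z' (some i) = s • (w i • z i) := fun i => hterm i
    calc w' none • z' none + ∑ i, w' (some i) • z' (some i)
        = ∑ i, s • (w i • z i) := by
          simp only [h2]
          simp [w', z']
      _ = s • x := by rw [← Finset.smul_sum, hxe]
  exact mem_convexHull_of_exists_fintype w' z' hw'0 hw'1 hz' hxe'

/-- The slice of `COR(G)` at constant marginal `t`. -/
def slice (t : ℝ) : Set (G.edgeSet → ℝ) :=
  {q : G.edgeSet → ℝ | ((fun _ => t), q) ∈ cor G}

lemma smul_mem_slice {t t' : ℝ} (ht : 0 < t) (ht' : 0 ≤ t')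
    (h1 : (Fintype.card V : ℝ) * t' ≤ 1) {q : G.edgeSet → ℝ} (hq : q ∈ slice G t) :
    (t' / t) • q ∈ slice G t' := by
  have hs : (0 : ℝ) ≤ t' / t := div_nonneg ht' ht.le
  have hst : (t' / t) * ((Fintype.card V : ℝ) * t) ≤ 1 := by
    have : (t' / t) * ((Fintype.card V : ℝ) * t) = (Fintype.card V : ℝ) * t' := by
      field_simp
    rw [this]; exact h1
  have := key_smul_mem G hs hst hq (fun i => rfl)
  have heq : (t' / t) • ((fun _ => t : V → ℝ), q) = ((fun _ => t' : V → ℝ), (t' / t) • q) := by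
    refine Prod.ext ?_ ?_
    · funext i
      simp [Prod.smul_fst, smul_eq_mul]
      field_simp
    · rfl
  rw [heq] at this
  exact this

lemma slice_scale {t t' : ℝ} (ht : 0 < t) (ht' : 0 < t')
    (h1 : (Fintype.card V : ℝ) * t ≤ 1) (h1' : (Fintype.card V : ℝ) * t' ≤ 1) :
    slice G t' = (t' / t) • slice G t := by
  ext q
  constructor
  · intro hq
    refine ⟨(t / t') • q, smul_mem_slice G ht' ht.le h1 hq, ?_⟩
    show (t' / t) • ((t / t') • q) = q
    rw [smul_smul, div_mul_div_comm, mul_comm t' t, div_self (by positivity), one_smul]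
  · rintro ⟨q₀, hq₀, rfl⟩
    exact smul_mem_slice G ht ht'.le h1' hq₀

lemma slice_subset (t : ℝ) :
    slice G t ⊆ Set.pi Set.univ (fun _ : G.edgeSet => Set.Icc (0 : ℝ) 1) := by
  have hC : cor G ⊆ {x : (V → ℝ) × (G.edgeSet → ℝ) | ∀ e, x.2 e ∈ Set.Icc (0 : ℝ) 1} := by
    apply convexHull_min
    · rintro _ ⟨f, rfl⟩ e
      obtain ⟨e, he⟩ := e
      induction e using Sym2.ind with
      | _ i j =>
        unfold corPoint
        by_cases hi : f i <;> by_cases hj : f j <;> simp [hi, hj]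
    · intro x hx y hy a b ha hb hab
      exact fun e => (convex_Icc (0 : ℝ) 1) (hx e) (hy e) ha hb hab
  intro q hq e _
  exact hC hq e

lemma volume_slice_ne_top (t : ℝ) : volume (slice G t) ≠ ⊤ := by
  refine ne_top_of_le_ne_top ?_ (measure_mono (slice_subset G t))
  rw [volume_pi_pi]
  simp [Real.volume_Icc]

end CorAux

/-- There are `τ ∈ (0, 1/2]` and `c ≥ 0` such that for every `t ∈ (0, τ)`, the volume of the
symmetric slice of `COR(G)` at marginal `t` equals `c * t ^ |E|`; i.e. the ratio between the
volumes of the local and non-signaling slices is constant on a nonempty interval `(0, τ)`. -/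
theorem stmt4 {V : Type} [Fintype V] [DecidableEq V] (G : SimpleGraph V)
    [DecidableRel G.Adj] :
    ∃ τ c : ℝ, 0 < τ ∧ τ ≤ 1 / 2 ∧ 0 ≤ c ∧
      ∀ t : ℝ, 0 < t → t < τ →
        volume {q : G.edgeSet → ℝ | ((fun _ => t), q) ∈ cor G} =
          ENNReal.ofReal (c * t ^ (Fintype.card G.edgeSet)) := by
  classical
  set n : ℝ := (Fintype.card V : ℝ) with hn
  have hn0 : 0 ≤ n := by positivity
  set τ : ℝ := 1 / (2 * (n + 1)) with hτ
  have hτpos : 0 < τ := by positivity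
  have hτhalf : τ ≤ 1 / 2 := by
    rw [hτ]
    apply one_div_le_one_div_of_le
    · norm_num
    · nlinarith
  set t₀ : ℝ := τ / 2 with ht₀def
  have ht₀pos : 0 < t₀ := by positivity
  have ht₀τ : t₀ < τ := by rw [ht₀def]; linarith
  have hbound : ∀ t : ℝ, 0 < t → t < τ → n * t ≤ 1 := by
    intro t ht htτ
    have h2 : (0:ℝ) < 2 * (n + 1) := by positivity
    rw [hτ, lt_div_iff₀ h2] at htτ
    nlinarith [htτ, hn0, ht.le]
  set m := Fintype.card G.edgeSet with hm
  set v : ℝ := (volume (CorAux.slice G t₀)).toReal with hv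
  have hv0 : 0 ≤ v := ENNReal.toReal_nonneg
  set c : ℝ := v / t₀ ^ m with hc
  refine ⟨τ, c, hτpos, hτhalf, by positivity, ?_⟩
  intro t ht htτ
  have hscale : CorAux.slice G t = (t / t₀) • CorAux.slice G t₀ :=
    CorAux.slice_scale G ht₀pos ht (hbound t₀ ht₀pos ht₀τ) (hbound t ht htτ)
  have hEq : {q : G.edgeSet → ℝ | ((fun _ => t), q) ∈ cor G} = CorAux.slice G t := rfl
  rw [hEq, hscale, Measure.addHaar_smul_of_nonneg volume (by positivity) (CorAux.slice G t₀)]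
  have hfr : Module.finrank ℝ (G.edgeSet → ℝ) = m := Module.finrank_pi ℝ
  rw [hfr]
  have hvol : volume (CorAux.slice G t₀) = ENNReal.ofReal v :=
    (ENNReal.ofReal_toReal (CorAux.volume_slice_ne_top G t₀)).symm
  rw [hvol, ← ENNReal.ofReal_mul (by positivity)]
  congr 1
  rw [hc, div_pow]
  field_simp
end
end

section
/- Let n ≥ m ≥ 2 be integers, let S ⊆ {1,…,n} with |S| = m, and let t be a real number with (m−1)/(2m) ≤ t ≤ 1/2. Then the Lebesgue volume of the set {x ∈ [0,1]^n : Σ_{i∉S} x_i − Σ_{i∈S} x_i ≥ (m−1)/(2t) + n − 2m} equals (1/n!) · (m − (m−1)/(2t))^n. -/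
/-
Put `c = m - (m-1)/(2t)`. The threshold of the inequality is `|Sᶜ| - c`, and the hypotheses on
`t` say exactly that `0 ≤ c ≤ 1`. Replacing `xᵢ` by `1 - xᵢ` for `i ∉ S` preserves volume and maps
the region onto the corner simplex `{y ≥ 0, ∑ y ≤ c}`, the constraint `y ≤ 1` being automatic
because `c ≤ 1`. The `2ⁿ` sign reflections of that simplex tile the `ℓ¹`-ball of radius `c`, of
volume `(2c)ⁿ/n!`, so the simplex has volume `cⁿ/n!`.
-/

open MeasureTheory Finset

section
variable {ι : Type*}

variable (ι) in
def cornerSimplex [Fintype ι] (c : ℝ) : Set (ι → ℝ) :=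
  {x | (∀ i, 0 ≤ x i) ∧ ∑ i, x i ≤ c}

section
variable [Fintype ι]

theorem measurableSet_cornerSimplex (c : ℝ) : MeasurableSet (cornerSimplex ι c) := by
  simp only [cornerSimplex, Set.ofPred_and, Set.ofPred_forall]
  exact (MeasurableSet.iInter fun i ↦
    measurableSet_le measurable_const (measurable_pi_apply i)).inter
      (measurableSet_le (Finset.measurable_sum _ fun i _ ↦ measurable_pi_apply i)
        measurable_const)

theorem le_of_mem_cornerSimplex {c : ℝ} {x : ι → ℝ} (hx : x ∈ cornerSimplex ι c) (i : ι) :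
    x i ≤ c :=
  (single_le_sum (fun j _ ↦ hx.1 j) (mem_univ i)).trans hx.2

end

variable [DecidableEq ι]

def negOn (T : Finset ι) (x : ι → ℝ) (i : ι) : ℝ := if i ∈ T then -x i else x i

def reflectCompl (S : Finset ι) (x : ι → ℝ) (i : ι) : ℝ := if i ∈ S then x i else 1 - x i

theorem abs_negOn (T : Finset ι) (x : ι → ℝ) (i : ι) : |negOn T x i| = |x i| := by
  unfold negOn; split_ifs <;> simp

theorem mem_Icc_reflectCompl_iff (S : Finset ι) (x : ι → ℝ) (i : ι) :
    (0 ≤ reflectCompl S x i ∧ reflectCompl S x i ≤ 1) ↔ (0 ≤ x i ∧ x i ≤ 1) := by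
  unfold reflectCompl
  split_ifs <;> constructor <;> intro h <;> constructor <;> linarith [h.1, h.2]

variable [Fintype ι]

theorem volume_preserving_pi_ite (s : Finset ι) {f g : ℝ → ℝ} (hf : MeasurePreserving f)
    (hg : MeasurePreserving g) :
    MeasurePreserving (fun (x : ι → ℝ) i ↦ if i ∈ s then f (x i) else g (x i)) :=
  volume_preserving_pi (f := fun i u ↦ if i ∈ s then f u else g u) fun i ↦ by
    by_cases h : i ∈ s <;> simpa [h]

theorem volume_preserving_negOn (T : Finset ι) : MeasurePreserving (negOn T) :=
  volume_preserving_pi_ite T (Measure.measurePreserving_neg _) (MeasurePreserving.id _)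

theorem volume_preserving_reflectCompl (S : Finset ι) : MeasurePreserving (reflectCompl S) :=
  volume_preserving_pi_ite S (MeasurePreserving.id _) (Measure.measurePreserving_sub_left _ 1)

theorem setOf_sum_abs_le_eq_iUnion_preimage_negOn (c : ℝ) :
    {x : ι → ℝ | ∑ i, |x i| ≤ c} = ⋃ T : Finset ι, negOn T ⁻¹' cornerSimplex ι c := by
  ext x
  simp only [Set.mem_ofPred, Set.mem_iUnion, Set.mem_preimage, cornerSimplex]
  constructor
  · intro hx
    have hneg (i : ι) : negOn (univ.filter fun j ↦ x j < 0) x i = |x i| := by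
      by_cases h : x i < 0
      · simp [negOn, h, abs_of_neg h]
      · simp [negOn, h, abs_of_nonneg (not_lt.mp h)]
    exact ⟨_, fun i ↦ hneg i ▸ abs_nonneg _, by simpa only [hneg] using hx⟩
  · rintro ⟨T, hnonneg, hsum⟩
    calc ∑ i, |x i| = ∑ i, negOn T x i :=
          sum_congr rfl fun i _ ↦ by rw [← abs_negOn T, abs_of_nonneg (hnonneg i)]
      _ ≤ c := hsum

theorem aedisjoint_preimage_negOn {T T' : Finset ι} (h : T ≠ T') (c : ℝ) :
    AEDisjoint volume (negOn T ⁻¹' cornerSimplex ι c) (negOn T' ⁻¹' cornerSimplex ι c) := by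
  obtain ⟨i, hi⟩ : ∃ i, ¬(i ∈ T ↔ i ∈ T') := by
    by_contra! h'; exact h (Finset.ext h')
  refine measure_mono_null (fun x hx ↦ ?_) (Measure.pi_hyperplane _ i 0)
  have h1 := hx.1.1 i
  have h2 := hx.2.1 i
  simp only [negOn] at h1 h2
  show x i = 0
  by_cases hT : i ∈ T <;> by_cases hT' : i ∈ T' <;> simp_all <;> linarith

theorem two_pow_mul_volume_cornerSimplex (c : ℝ) :
    2 ^ Fintype.card ι * volume (cornerSimplex ι c) =
      volume {x : ι → ℝ | ∑ i, |x i| ≤ c} := by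
  have hmeas (T : Finset ι) : NullMeasurableSet (negOn T ⁻¹' cornerSimplex ι c) :=
    ((measurableSet_cornerSimplex c).preimage
      (volume_preserving_negOn T).measurable).nullMeasurableSet
  rw [setOf_sum_abs_le_eq_iUnion_preimage_negOn,
    measure_iUnion₀ (fun _ _ h ↦ aedisjoint_preimage_negOn h c) hmeas, tsum_fintype]
  simp_rw [(volume_preserving_negOn _).measure_preimage
    (measurableSet_cornerSimplex c).nullMeasurableSet]
  rw [sum_const, card_univ, Fintype.card_finset, nsmul_eq_mul]
  norm_cast

theorem volume_cornerSimplex [Nonempty ι] {c : ℝ} (hc : 0 ≤ c) :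
    volume (cornerSimplex ι c) =
      ENNReal.ofReal (c ^ Fintype.card ι / (Fintype.card ι).factorial) := by
  set n := Fintype.card ι
  have hcross : volume {x : ι → ℝ | ∑ i, |x i| ≤ c} =
      ENNReal.ofReal c ^ n * ENNReal.ofReal (2 ^ n / n.factorial) := by
    simpa [Real.Gamma_nat_eq_factorial, one_add_one_eq_two] using
      volume_sum_rpow_le (ι := ι) le_rfl c
  refine (ENNReal.mul_right_inj (pow_ne_zero n two_ne_zero)
    (ENNReal.pow_ne_top ENNReal.ofNat_ne_top)).mp ?_
  rw [two_pow_mul_volume_cornerSimplex, hcross, ← ENNReal.ofReal_pow hc,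
    ← ENNReal.ofReal_mul (by positivity), mul_div_left_comm,
    ENNReal.ofReal_mul (by positivity), ENNReal.ofReal_pow zero_le_two, ENNReal.ofReal_ofNat]

theorem sum_reflectCompl (S : Finset ι) (x : ι → ℝ) :
    ∑ i, reflectCompl S x i = #Sᶜ - (∑ i ∈ Sᶜ, x i - ∑ i ∈ S, x i) := by
  have hS : ∑ i ∈ S, reflectCompl S x i = ∑ i ∈ S, x i := sum_congr rfl fun i hi ↦ if_pos hi
  have hSc : ∑ i ∈ Sᶜ, reflectCompl S x i = ∑ i ∈ Sᶜ, (1 - x i) :=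
    sum_congr rfl fun i hi ↦ if_neg (mem_compl.mp hi)
  rw [← sum_add_sum_compl S, hS, hSc, sum_sub_distrib, sum_const, nsmul_one]
  ring

theorem setOf_cube_cut_eq_preimage_reflectCompl (S : Finset ι) {c : ℝ} (hc : c ≤ 1) :
    {x : ι → ℝ | (∀ i, 0 ≤ x i ∧ x i ≤ 1) ∧ #Sᶜ - c ≤ ∑ i ∈ Sᶜ, x i - ∑ i ∈ S, x i} =
      reflectCompl S ⁻¹' cornerSimplex ι c := by
  ext x
  simp only [Set.mem_ofPred, Set.mem_preimage, ← mem_Icc_reflectCompl_iff S x]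
  constructor
  · rintro ⟨hcube, hcut⟩
    exact ⟨fun i ↦ (hcube i).1, by rw [sum_reflectCompl]; linarith⟩
  · intro hy
    have hsum := hy.2
    rw [sum_reflectCompl] at hsum
    exact ⟨fun i ↦ ⟨hy.1 i, (le_of_mem_cornerSimplex hy i).trans hc⟩, by linarith⟩

theorem volume_setOf_cube_cut [Nonempty ι] (S : Finset ι) {c : ℝ} (hc0 : 0 ≤ c)
    (hc1 : c ≤ 1) :
    volume {x : ι → ℝ | (∀ i, 0 ≤ x i ∧ x i ≤ 1) ∧ #Sᶜ - c ≤ ∑ i ∈ Sᶜ, x i - ∑ i ∈ S, x i} =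
      ENNReal.ofReal (c ^ Fintype.card ι / (Fintype.card ι).factorial) := by
  rw [setOf_cube_cut_eq_preimage_reflectCompl S hc1,
    (volume_preserving_reflectCompl S).measure_preimage
      (measurableSet_cornerSimplex c).nullMeasurableSet,
    volume_cornerSimplex hc0]

end

theorem stmt10_general (n m : ℕ) (hm : 2 ≤ m) (S : Finset (Fin n)) (hS : S.card = m)
    (t : ℝ) (ht0 : ((m : ℝ) - 1) / (2 * m) ≤ t) (ht1 : t ≤ 1 / 2) :
    volume {x : Fin n → ℝ |
        (∀ i, 0 ≤ x i ∧ x i ≤ 1) ∧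
        ((m : ℝ) - 1) / (2 * t) + n - 2 * m ≤ (∑ i ∈ Sᶜ, x i) - ∑ i ∈ S, x i} =
      ENNReal.ofReal ((1 / n.factorial) * ((m : ℝ) - ((m : ℝ) - 1) / (2 * t)) ^ n) := by
  have hmn : m ≤ n := hS ▸ card_le_univ S |>.trans_eq (Fintype.card_fin n)
  have : Nonempty (Fin n) := Fin.pos_iff_nonempty.mp (by omega)
  have hm1 : (0 : ℝ) < m - 1 := by
    have : (2 : ℝ) ≤ m := by exact_mod_cast hm
    linarith
  have ht : 0 < 2 * t := by
    have : 0 < ((m : ℝ) - 1) / (2 * m) := by positivity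
    linarith
  have hc0 : ((m : ℝ) - 1) / (2 * t) ≤ m := by
    rw [div_le_iff₀ ht]
    linarith [(div_le_iff₀ (by positivity : (0 : ℝ) < 2 * m)).mp ht0]
  have hc1 : (m : ℝ) - 1 ≤ ((m : ℝ) - 1) / (2 * t) := le_div_self hm1.le ht (by linarith)
  have hcard : ((#Sᶜ : ℕ) : ℝ) = n - m := by
    rw [card_compl, Fintype.card_fin, hS, Nat.cast_sub hmn]
  have hthreshold :
      ((m : ℝ) - 1) / (2 * t) + n - 2 * m = #Sᶜ - (m - (m - 1) / (2 * t)) := by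
    rw [hcard]; ring
  rw [hthreshold, volume_setOf_cube_cut S (by linarith) (by linarith), Fintype.card_fin,
    one_div_mul_eq_div]

/-- For `(m-1)/(2m) ≤ t ≤ 1/2`, the volume cut off from the unit cube by the `m`-negative
inequality equals `(1/n!) · (m - (m-1)/(2t))ⁿ`. -/
theorem stmt10 (n m : ℕ) (hm : 2 ≤ m) (hmn : m ≤ n) (S : Finset (Fin n)) (hS : S.card = m)
    (t : ℝ) (ht0 : ((m : ℝ) - 1) / (2 * m) ≤ t) (ht1 : t ≤ 1 / 2) :
    volume {x : Fin n → ℝ |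
        (∀ i, 0 ≤ x i ∧ x i ≤ 1) ∧
        ((m : ℝ) - 1) / (2 * t) + n - 2 * m ≤ (∑ i ∈ Sᶜ, x i) - ∑ i ∈ S, x i} =
      ENNReal.ofReal ((1 / n.factorial) * ((m : ℝ) - ((m : ℝ) - 1) / (2 * t)) ^ n) :=
  stmt10_general n m hm S hS t ht0 ht1
end

section
/- Let n ≥ 3 be an integer and m an odd integer with 1 ≤ m ≤ n. Let t be a real number satisfying (m−1)/(2m) < t ≤ (m+1)/(2(m+2)) if n − m > 1, and (m−1)/(2m) < t ≤ 1/2 if n − m ≤ 1. Define T_t := {x ∈ [0,1]^n : for every subset S ⊆ {1,…,n} of odd cardinality, Σ_{i∉S} x_i − Σ_{i∈S} x_i ≤ (|S|−1)/(2t) + n − 2|S|}. Then the Lebesgue volume of T_t equals 1 − Σ_{k odd, 1 ≤ k ≤ m} (1/n!) · C(n,k) · (k − (k−1)/(2t))^n, where C(n,k) is the binomial coefficient. -/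
/-!
For `x` in the unit cube, `∑_{i ∈ S} x i + ∑_{i ∉ S} (1 - x i)` is the `ℓ¹`-distance from `x` to the
vertex vanishing exactly on `S`, and the odd-`S` inequality fails exactly when this distance is
below `r_k = k - (k - 1) / (2t)`, `k = #S`. So `T_t` is the cube minus open corner simplices of
radius `r_k` at the vertices with an odd number `k` of zeros. In the given range of `t`,
`r_k ∈ (0, 1]` for odd `k ≤ m` and `r_k ≤ 0` for odd `k > m`. Two such vertices are at
`ℓ¹`-distance `≥ 2`, so the corners are disjoint, and each is a reflected copy of the simplex
`{x ≥ 0, ∑ x < r_k}` of volume `r_k ^ n / n!`; there are `n.choose k` of them for each `k`.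
-/

open MeasureTheory Finset
open scoped symmDiff

def openSimplex (ι : Type*) [Fintype ι] (c : ℝ) : Set (ι → ℝ) :=
  {x | (∀ i, 0 ≤ x i) ∧ ∑ i, x i < c}

section Simplex

variable {ι : Type*} [Fintype ι]

lemma measurableSet_openSimplex (c : ℝ) : MeasurableSet (openSimplex ι c) := by
  simp only [openSimplex, Set.ofPred_and, Set.ofPred_forall]
  exact (MeasurableSet.iInter fun i =>
    measurableSet_le measurable_const (measurable_pi_apply i)).inter
      (measurableSet_lt (Finset.measurable_sum _ fun i _ => measurable_pi_apply i)
        measurable_const)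

lemma openSimplex_eq_empty {c : ℝ} (hc : c ≤ 0) : openSimplex ι c = ∅ :=
  Set.eq_empty_of_forall_notMem fun _ ⟨hx, hsum⟩ =>
    (sum_nonneg fun i _ => hx i).not_gt (hsum.trans_le hc)

lemma Fin.cons_mem_openSimplex {n : ℕ} {a c : ℝ} {y : Fin n → ℝ} :
    Fin.cons a y ∈ openSimplex (Fin (n + 1)) c ↔ 0 ≤ a ∧ y ∈ openSimplex (Fin n) (c - a) := by
  simp only [openSimplex, Set.mem_ofPred_eq, Fin.forall_fin_succ, Fin.sum_univ_succ,
    Fin.cons_zero, Fin.cons_succ, lt_sub_iff_add_lt', and_assoc]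

lemma setLIntegral_Ico_ofReal_sub_pow_div_factorial (n : ℕ) {c : ℝ} (hc : 0 ≤ c) :
    ∫⁻ a in Set.Ico 0 c, ENNReal.ofReal ((c - a) ^ n / n.factorial) =
      ENNReal.ofReal (c ^ (n + 1) / (n + 1).factorial) := by
  rw [← ofReal_integral_eq_lintegral_ofReal]
  · rw [integral_Ico_eq_integral_Ioo, ← integral_Ioc_eq_integral_Ioo,
      ← intervalIntegral.integral_of_le hc, intervalIntegral.integral_div,
      intervalIntegral.integral_comp_sub_left (fun u => u ^ n) c]
    simp [Nat.factorial_succ]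
    field_simp
  · exact (Continuous.integrableOn_Icc (by fun_prop)).mono_set Set.Ico_subset_Icc_self
  · filter_upwards [ae_restrict_mem measurableSet_Ico] with a ha
    have : 0 ≤ c - a := by linarith [ha.2]
    positivity

lemma volume_openSimplex_fin (n : ℕ) {c : ℝ} (hc : 0 < c) :
    volume (openSimplex (Fin n) c) = ENNReal.ofReal (c ^ n / n.factorial) := by
  induction n generalizing c with
  | zero =>
    rw [show openSimplex (Fin 0) c = Set.univ by ext x; simp [openSimplex, hc]]
    simp [volume_pi]
  | succ n ih =>
    let e := MeasurableEquiv.piFinSuccAbove (fun _ : Fin (n + 1) => ℝ) 0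
    have hslice (a : ℝ) : volume (Prod.mk a ⁻¹' (e.symm ⁻¹' openSimplex (Fin (n + 1)) c)) =
        (Set.Ico 0 c).indicator (fun a => ENNReal.ofReal ((c - a) ^ n / n.factorial)) a := by
      have hmem : Prod.mk a ⁻¹' (e.symm ⁻¹' openSimplex (Fin (n + 1)) c) =
          {y | 0 ≤ a ∧ y ∈ openSimplex (Fin n) (c - a)} := by
        ext y
        simp [e, Fin.consEquiv, Fin.cons_mem_openSimplex]
      rw [hmem]
      by_cases ha : a ∈ Set.Ico 0 c
      · simp [Set.indicator_of_mem ha, ha.1, ih (sub_pos.2 ha.2)]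
      · rw [Set.indicator_of_notMem ha]
        rcases not_and_or.1 ha with ha | ha
        · simp [ha]
        · simp [openSimplex_eq_empty (sub_nonpos.2 (not_lt.1 ha))]
    rw [← (volume_preserving_piFinSuccAbove (fun _ => ℝ) 0).symm.measure_preimage
      (measurableSet_openSimplex c).nullMeasurableSet, Measure.volume_eq_prod,
      Measure.prod_apply (e.symm.measurable (measurableSet_openSimplex c)),
      lintegral_congr hslice, lintegral_indicator measurableSet_Ico,
      setLIntegral_Ico_ofReal_sub_pow_div_factorial n hc.le]

lemma volume_openSimplex {c : ℝ} (hc : 0 < c) :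
    volume (openSimplex ι c) =
      ENNReal.ofReal (c ^ Fintype.card ι / (Fintype.card ι).factorial) := by
  let e := (Fintype.equivFin ι).symm
  have hpre : MeasurableEquiv.piCongrLeft (fun _ => ℝ) e ⁻¹' openSimplex ι c =
      openSimplex (Fin (Fintype.card ι)) c := by
    ext x
    simp only [openSimplex, Set.mem_preimage, Set.mem_ofPred_eq, MeasurableEquiv.coe_piCongrLeft,
      ← e.forall_congr_right, ← e.sum_comp, Equiv.piCongrLeft_apply_apply]
  rw [← (volume_measurePreserving_piCongrLeft (fun _ => ℝ) e).measure_preimage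
    (measurableSet_openSimplex c).nullMeasurableSet, hpre, volume_openSimplex_fin _ hc]

lemma openSimplex_subset_Icc {c : ℝ} (hc : c ≤ 1) : openSimplex ι c ⊆ Set.Icc 0 1 :=
  fun _ ⟨hx, hsum⟩ => ⟨hx, fun i =>
    (single_le_sum (fun j _ => hx j) (mem_univ i)).trans (hsum.trans_le hc).le⟩

end Simplex

lemma Finset.sum_powerset_filter_card {α β : Type*} [AddCommMonoid β] (p : ℕ → Prop)
    [DecidablePred p] (f : ℕ → β) (s : Finset α) :
    ∑ T ∈ s.powerset with p #T, f #T = ∑ k ∈ range (#s + 1) with p k, (#s).choose k • f k := by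
  simp only [sum_filter]
  convert sum_powerset_apply_card (fun k => if p k then f k else 0) using 2
  rw [smul_ite, smul_zero]

lemma Finset.two_le_card_symmDiff_of_odd {α : Type*} [DecidableEq α] {S T : Finset α}
    (hS : Odd #S) (hT : Odd #T) (hne : S ≠ T) : 2 ≤ #(S ∆ T) := by
  have hpos : #(S ∆ T) ≠ 0 := by simpa [symmDiff_eq_bot] using hne
  have hcard : #(S ∆ T) + 2 * #(S ∩ T) = #S + #T := by
    rw [symmDiff_def, sup_eq_union, card_union_of_disjoint disjoint_sdiff_sdiff]
    have hS := card_sdiff_add_card_inter S T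
    have hT := card_sdiff_add_card_inter T S
    rw [inter_comm T S] at hT
    omega
  obtain ⟨a, ha⟩ := hS
  obtain ⟨b, hb⟩ := hT
  omega

section Corner

variable {ι : Type*} [DecidableEq ι]

lemma piecewise_one_sub_mem_Icc_iff {S : Finset ι} {x : ι → ℝ} :
    S.piecewise x (1 - x) ∈ Set.Icc 0 1 ↔ x ∈ Set.Icc 0 1 := by
  simp only [Set.mem_Icc, Pi.le_def, ← forall_and]
  refine forall_congr' fun i => ?_
  by_cases hi : i ∈ S
  · simp [hi]
  · simp [hi, and_comm]

variable [Fintype ι]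

def cubeCorner (S : Finset ι) (c : ℝ) : Set (ι → ℝ) :=
  {x | x ∈ Set.Icc 0 1 ∧ ∑ i, S.piecewise x (1 - x) i < c}

lemma measurePreserving_piecewise_one_sub (S : Finset ι) :
    MeasurePreserving (fun x : ι → ℝ => S.piecewise x (1 - x)) volume volume := by
  have h : (fun x : ι → ℝ => S.piecewise x (1 - x)) =
      fun x i => (if i ∈ S then id else fun a : ℝ => 1 - a) (x i) := by
    ext x i
    by_cases hi : i ∈ S <;> simp [hi]
  rw [h]
  refine volume_preserving_pi fun i => ?_
  split_ifs
  · exact MeasurePreserving.id _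
  · exact Measure.measurePreserving_sub_left volume 1

lemma cubeCorner_eq_preimage_openSimplex (S : Finset ι) {c : ℝ} (hc : c ≤ 1) :
    cubeCorner S c = (fun x => S.piecewise x (1 - x)) ⁻¹' openSimplex ι c := by
  ext x
  refine ⟨fun ⟨hx, hsum⟩ => ⟨(piecewise_one_sub_mem_Icc_iff.2 hx).1, hsum⟩, fun hx => ?_⟩
  exact ⟨piecewise_one_sub_mem_Icc_iff.1 (openSimplex_subset_Icc hc hx), hx.2⟩

lemma volume_cubeCorner (S : Finset ι) {c : ℝ} (hc0 : 0 < c) (hc1 : c ≤ 1) :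
    volume (cubeCorner S c) =
      ENNReal.ofReal (c ^ Fintype.card ι / (Fintype.card ι).factorial) := by
  rw [cubeCorner_eq_preimage_openSimplex S hc1,
    (measurePreserving_piecewise_one_sub S).measure_preimage
      (measurableSet_openSimplex c).nullMeasurableSet, volume_openSimplex hc0]

lemma cubeCorner_eq_empty (S : Finset ι) {c : ℝ} (hc : c ≤ 0) : cubeCorner S c = ∅ := by
  rw [cubeCorner_eq_preimage_openSimplex S (hc.trans zero_le_one), openSimplex_eq_empty hc,
    Set.preimage_empty]

lemma measurableSet_cubeCorner (S : Finset ι) (c : ℝ) : MeasurableSet (cubeCorner S c) :=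
  measurableSet_Icc.inter <| measurableSet_lt (Finset.measurable_sum _ fun i _ =>
    (measurable_pi_apply i).comp (measurePreserving_piecewise_one_sub S).measurable)
    measurable_const

lemma card_symmDiff_le_sum_piecewise (S T : Finset ι) {x : ι → ℝ} (hx : x ∈ Set.Icc 0 1) :
    (#(S ∆ T) : ℝ) ≤ ∑ i, (S.piecewise x (1 - x) i + T.piecewise x (1 - x) i) := by
  have hnonneg (i : ι) : 0 ≤ S.piecewise x (1 - x) i + T.piecewise x (1 - x) i := by
    have h0 : 0 ≤ x i := hx.1 i
    have h1 : x i ≤ 1 := hx.2 i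
    by_cases hS : i ∈ S <;> by_cases hT : i ∈ T <;> simp [hS, hT] <;> linarith
  calc (#(S ∆ T) : ℝ) = ∑ i ∈ S ∆ T, (S.piecewise x (1 - x) i + T.piecewise x (1 - x) i) := by
        rw [cast_card]
        refine sum_congr rfl fun i hi => ?_
        rcases mem_symmDiff.1 hi with ⟨hS, hT⟩ | ⟨hT, hS⟩ <;> simp [hS, hT]
    _ ≤ _ := sum_le_sum_of_subset_of_nonneg (subset_univ _) fun i _ _ => hnonneg i

lemma disjoint_cubeCorner {S T : Finset ι} {c d : ℝ} (h : c + d ≤ #(S ∆ T)) :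
    Disjoint (cubeCorner S c) (cubeCorner T d) := by
  refine Set.disjoint_left.2 fun x ⟨hx, hS⟩ ⟨_, hT⟩ => ?_
  have := card_symmDiff_le_sum_piecewise S T hx
  rw [sum_add_distrib] at this
  linarith

lemma sum_compl_sub_sum_le_iff (S : Finset ι) (x : ι → ℝ) (a : ℝ) :
    ∑ i ∈ Sᶜ, x i - ∑ i ∈ S, x i ≤ a + Fintype.card ι - 2 * #S ↔
      #S - a ≤ ∑ i, S.piecewise x (1 - x) i := by
  have hcompl : ∑ i ∈ Sᶜ, (1 : ℝ) = Fintype.card ι - #S := by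
    rw [sum_const, card_compl, nsmul_one, Nat.cast_sub (card_le_univ S)]
  rw [sum_piecewise, univ_inter, ← compl_eq_univ_sdiff]
  simp only [Pi.sub_apply, Pi.one_apply, sum_sub_distrib, hcompl]
  constructor <;> intro h <;> linarith

lemma volume_iUnion_odd_cubeCorner {r : ℕ → ℝ} (hr : ∀ k, Odd k → r k ≤ 1) :
    volume (⋃ (S : Finset ι) (_ : Odd #S), cubeCorner S (r #S)) =
      ∑ k ∈ range (Fintype.card ι + 1) with Odd k ∧ 0 < r k, (Fintype.card ι).choose k •
        ENNReal.ofReal (r k ^ Fintype.card ι / (Fintype.card ι).factorial) := by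
  have hunion : ⋃ (S : Finset ι) (_ : Odd #S), cubeCorner S (r #S) =
      ⋃ S ∈ (univ.filter fun S : Finset ι => Odd #S), cubeCorner S (r #S) := by
    simp
  have hdisj : Set.PairwiseDisjoint (↑(univ.filter fun S : Finset ι => Odd #S) : Set (Finset ι))
      fun S => cubeCorner S (r #S) := by
    intro S hS T hT hne
    simp only [coe_filter, mem_univ, true_and, Set.mem_ofPred_eq] at hS hT
    refine disjoint_cubeCorner ?_
    have h2 : (2 : ℝ) ≤ #(S ∆ T) := by exact_mod_cast two_le_card_symmDiff_of_odd hS hT hne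
    linarith [hr _ hS, hr _ hT]
  rw [hunion, measure_biUnion_finset hdisj fun S _ => measurableSet_cubeCorner S _,
    ← powerset_univ, ← card_univ, ← sum_powerset_filter_card (fun k => Odd k ∧ 0 < r k),
    ← filter_filter, sum_filter (fun T => 0 < r #T), card_univ]
  refine sum_congr rfl fun S hS => ?_
  split_ifs with h
  · exact volume_cubeCorner S h (hr _ (mem_filter.1 hS).2)
  · rw [cubeCorner_eq_empty S (not_lt.1 h), measure_empty]

lemma volume_Icc_diff_iUnion_odd_cubeCorner {r : ℕ → ℝ} (hr : ∀ k, Odd k → r k ≤ 1) :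
    volume (Set.Icc (0 : ι → ℝ) 1 \ ⋃ (S : Finset ι) (_ : Odd #S), cubeCorner S (r #S)) =
      ENNReal.ofReal (1 - ∑ k ∈ range (Fintype.card ι + 1) with Odd k ∧ 0 < r k,
        1 / (Fintype.card ι).factorial * (Fintype.card ι).choose k * r k ^ Fintype.card ι) := by
  have hcube : volume (Set.Icc (0 : ι → ℝ) 1) = 1 := by simp [Real.volume_Icc_pi]
  have hsub : ⋃ (S : Finset ι) (_ : Odd #S), cubeCorner S (r #S) ⊆ Set.Icc 0 1 :=
    Set.iUnion₂_subset fun S _ _ hx => hx.1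
  have hmeas : MeasurableSet (⋃ (S : Finset ι) (_ : Odd #S), cubeCorner S (r #S)) :=
    .iUnion fun S => .iUnion fun _ => measurableSet_cubeCorner S _
  have hterm : ∀ k ∈ (range (Fintype.card ι + 1)).filter (fun k => Odd k ∧ 0 < r k),
      0 ≤ 1 / ((Fintype.card ι).factorial : ℝ) * (Fintype.card ι).choose k *
        r k ^ Fintype.card ι := by
    intro k hk
    have := (mem_filter.1 hk).2.2
    positivity
  rw [measure_sdiff hsub hmeas.nullMeasurableSet (measure_ne_top_of_subset hsub (by simp [hcube])),
    hcube, volume_iUnion_odd_cubeCorner hr, ENNReal.ofReal_sub _ (sum_nonneg hterm),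
    ENNReal.ofReal_one, ENNReal.ofReal_sum_of_nonneg hterm]
  congr 1
  refine sum_congr rfl fun k _ => ?_
  rw [← ENNReal.ofReal_nsmul, nsmul_eq_mul]
  congr 1
  ring

end Corner

section Radius

variable {t : ℝ}

noncomputable def cornerRadius (t : ℝ) (k : ℕ) : ℝ := k - (k - 1) / (2 * t)

lemma cornerRadius_le_one (ht : 0 < t) (ht' : t ≤ 1 / 2) {k : ℕ} (hk : 1 ≤ k) :
    cornerRadius t k ≤ 1 := by
  have hk' : (1 : ℝ) ≤ k := by exact_mod_cast hk
  have : (k : ℝ) - 1 ≤ (k - 1) / (2 * t) := by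
    rw [le_div_iff₀ (by positivity)]
    nlinarith
  unfold cornerRadius
  linarith

lemma cornerRadius_pos_iff (ht : 0 < t) {k : ℕ} (hk : 0 < k) :
    0 < cornerRadius t k ↔ ((k : ℝ) - 1) / (2 * k) < t := by
  unfold cornerRadius
  rw [sub_pos, div_lt_iff₀ (by positivity), div_lt_iff₀ (by positivity)]
  constructor <;> intro h <;> linarith

lemma monotoneOn_sub_one_div_two_mul :
    MonotoneOn (fun k : ℝ => (k - 1) / (2 * k)) (Set.Ioi 0) := by
  intro j (hj : 0 < j) k (hk : 0 < k) hjk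
  simp only
  rw [div_le_div_iff₀ (by positivity) (by positivity)]
  nlinarith

lemma filter_odd_cornerRadius_pos {n m : ℕ} (hmo : Odd m) (hmn : m ≤ n) (ht : 0 < t)
    (htm : ((m : ℝ) - 1) / (2 * m) < t)
    (htM : m + 1 < n → t ≤ ((m : ℝ) + 1) / (2 * ((m : ℝ) + 2))) :
    (range (n + 1)).filter (fun k => Odd k ∧ 0 < cornerRadius t k) =
      (range (m + 1)).filter (fun k => Odd k) := by
  ext k
  simp only [mem_filter, mem_range]
  constructor
  · rintro ⟨hkn, hko, hpos⟩
    refine ⟨?_, hko⟩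
    by_contra! hmk
    have hk2 : m + 2 ≤ k := by
      obtain ⟨a, rfl⟩ := hko
      obtain ⟨b, rfl⟩ := hmo
      omega
    have hmono := monotoneOn_sub_one_div_two_mul (by simp; positivity) (by simp; omega)
      (by exact_mod_cast hk2 : ((m + 2 : ℕ) : ℝ) ≤ k)
    have htM' := htM (by omega)
    rw [cornerRadius_pos_iff ht hko.pos] at hpos
    push_cast at hmono
    ring_nf at hmono htM' hpos
    linarith
  · rintro ⟨hkm, hko⟩
    refine ⟨by omega, hko, (cornerRadius_pos_iff ht hko.pos).2 (lt_of_le_of_lt ?_ htm)⟩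
    exact monotoneOn_sub_one_div_two_mul (by simp; exact_mod_cast hko.pos)
      (by simp; exact_mod_cast hmo.pos) (by exact_mod_cast Nat.lt_succ_iff.1 hkm)

end Radius

lemma setOf_odd_ineq_eq_Icc_diff_iUnion_cubeCorner {ι : Type*} [Fintype ι] [DecidableEq ι]
    (t : ℝ) :
    {x : ι → ℝ | (∀ i, 0 ≤ x i ∧ x i ≤ 1) ∧ ∀ S : Finset ι, Odd #S →
        ∑ i ∈ Sᶜ, x i - ∑ i ∈ S, x i ≤ ((#S : ℝ) - 1) / (2 * t) + Fintype.card ι - 2 * #S} =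
      Set.Icc 0 1 \ ⋃ (S : Finset ι) (_ : Odd #S), cubeCorner S (cornerRadius t #S) := by
  ext x
  have hcube : (∀ i, 0 ≤ x i ∧ x i ≤ 1) ↔ x ∈ Set.Icc 0 1 := by simp [Pi.le_def, forall_and]
  simp only [Set.mem_ofPred_eq, Set.mem_sdiff, Set.mem_iUnion, cubeCorner, hcube,
    sum_compl_sub_sum_le_iff, not_exists, not_and, not_lt]
  exact and_congr_right fun hx => by simp [hx, cornerRadius]

theorem stmt12_general (n m : ℕ) (hmo : Odd m) (hm1 : 1 ≤ m) (hmn : m ≤ n) (t : ℝ)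
    (ht_big : m + 1 < n → (((m : ℝ) - 1) / (2 * m) < t ∧ t ≤ ((m : ℝ) + 1) / (2 * ((m : ℝ) + 2))))
    (ht_small : n ≤ m + 1 → (((m : ℝ) - 1) / (2 * m) < t ∧ t ≤ 1 / 2)) :
    volume {x : Fin n → ℝ |
        (∀ i, 0 ≤ x i ∧ x i ≤ 1) ∧
        ∀ S : Finset (Fin n), Odd S.card →
          (∑ i ∈ Sᶜ, x i) - ∑ i ∈ S, x i ≤ ((S.card : ℝ) - 1) / (2 * t) + n - 2 * S.card} =
      ENNReal.ofReal
        (1 - ∑ k ∈ (Finset.range (m + 1)).filter (fun k => Odd k),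
              (1 / n.factorial) * (n.choose k) * ((k : ℝ) - ((k : ℝ) - 1) / (2 * t)) ^ n) := by
  have htm : ((m : ℝ) - 1) / (2 * m) < t := by
    rcases lt_or_ge (m + 1) n with h | h
    exacts [(ht_big h).1, (ht_small h).1]
  have hm : (1 : ℝ) ≤ m := by exact_mod_cast hm1
  have ht : 0 < t := lt_of_le_of_lt (div_nonneg (by linarith) (by positivity)) htm
  have ht_half : t ≤ 1 / 2 := by
    rcases lt_or_ge (m + 1) n with h | h
    · refine (ht_big h).2.trans ?_
      rw [div_le_div_iff₀ (by positivity) (by norm_num)]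
      linarith
    · exact (ht_small h).2
  have hset := setOf_odd_ineq_eq_Icc_diff_iUnion_cubeCorner (ι := Fin n) t
  have hvol := volume_Icc_diff_iUnion_odd_cubeCorner (ι := Fin n)
    (r := cornerRadius t) fun k hk => cornerRadius_le_one ht ht_half hk.pos
  rw [Fintype.card_fin] at hset hvol
  rw [filter_odd_cornerRadius_pos hmo hmn ht htm fun h => (ht_big h).2] at hvol
  rw [hset, hvol]
  rfl

/-- The volume of the rescaled symmetric slice `T_t` of the local polytope of the `n`-cycle,
for `t` in the indicated range determined by the odd integer `m`. -/
theorem stmt12 (n m : ℕ) (hn : 3 ≤ n) (hmo : Odd m) (hm1 : 1 ≤ m) (hmn : m ≤ n) (t : ℝ)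
    (ht_big : m + 1 < n → (((m : ℝ) - 1) / (2 * m) < t ∧ t ≤ ((m : ℝ) + 1) / (2 * ((m : ℝ) + 2))))
    (ht_small : n ≤ m + 1 → (((m : ℝ) - 1) / (2 * m) < t ∧ t ≤ 1 / 2)) :
    volume {x : Fin n → ℝ |
        (∀ i, 0 ≤ x i ∧ x i ≤ 1) ∧
        ∀ S : Finset (Fin n), Odd S.card →
          (∑ i ∈ Sᶜ, x i) - ∑ i ∈ S, x i ≤ ((S.card : ℝ) - 1) / (2 * t) + n - 2 * S.card} =
      ENNReal.ofReal
        (1 - ∑ k ∈ (Finset.range (m + 1)).filter (fun k => Odd k),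
              (1 / n.factorial) * (n.choose k) * ((k : ℝ) - ((k : ℝ) - 1) / (2 * t)) ^ n) :=
  stmt12_general n m hmo hm1 hmn t ht_big ht_small
end

section
/- Let G=(V,E) be a finite simple graph and suppose V = V₁ ∪ V₂ with V₁ ∩ V₂ = {v} a single vertex, such that every edge of G has both endpoints in V₁ or both endpoints in V₂. Let G₁ and G₂ be the subgraphs of G induced on V₁ and V₂, with edge sets E₁ and E₂ (so E = E₁ ⊔ E₂). Then for every p : V → ℝ and q : E → ℝ, the pair (p,q) lies in COR(G) if and only if (p|_{V₁}, q|_{E₁}) ∈ COR(G₁) and (p|_{V₂}, q|_{E₂}) ∈ COR(G₂). Consequently, for every p : V → [0,1], the slice {q : (p,q) ∈ COR(G)} equals the product of the slices {q₁ : (p|_{V₁},q₁) ∈ COR(G₁)} and {q₂ : (p|_{V₂},q₂) ∈ COR(G₂)}, and its Lebesgue volume is the product of their volumes. -/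
/-!
A point of `COR(G)` is the vector of first and second moments of a probability distribution on
`{0,1}^V`. Restriction to `V₁` is linear and sends vertices of `COR(G)` to vertices of `COR(G₁)`,
which gives the forward direction. Conversely, distributions `w₁` on `{0,1}^V₁` and `w₂` on
`{0,1}^V₂` representing the two restrictions have the same marginal `(1 - p v, p v)` at the cut
vertex, so they glue to a distribution on `{0,1}^V` that makes the two sides conditionally
independent given the value at `v`:
`w h = w₁ (h|V₁) * w₂ (h|V₂) / P(h v)`. Since every vertex and every edge of `G` lies in `G₁` or
`G₂`, this distribution represents `(p, q)`. Finally `E = E₁ ⊔ E₂`, so each slice of `COR(G)` is a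
product of slices up to a relabelling of coordinates, which preserves volume.
-/

open MeasureTheory

noncomputable section

open SimpleGraph

theorem mem_convexHull_range_iff_exists_sum_smul {R E ι : Type*} [Field R] [LinearOrder R]
    [IsStrictOrderedRing R] [AddCommGroup E] [Module R E] [Fintype ι] {g : ι → E} {x : E} :
    x ∈ convexHull R (Set.range g) ↔
      ∃ w : ι → R, (∀ i, 0 ≤ w i) ∧ ∑ i, w i = 1 ∧ ∑ i, w i • g i = x := by
  classical
  have hg : Set.range g =
      Fintype.linearCombination R g '' Set.range fun i j => if i = j then 1 else 0 := by
    rw [← Set.range_comp]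
    congr 1
    funext i
    simp [Fintype.linearCombination_apply, ite_smul]
  rw [hg, ← LinearMap.image_convexHull, convexHull_basis_eq_stdSimplex]
  simp [stdSimplex, Fintype.linearCombination_apply, and_assoc]

section fiberSum

variable {α β E : Type*} [Fintype α] [DecidableEq β] [AddCommMonoid E] [Module ℝ E]

def fiberSum (r : α → β) (w : α → ℝ) (b : β) : ℝ :=
  ∑ a with r a = b, w a

theorem sum_fiberSum_smul [Fintype β] (r : α → β) (w : α → ℝ) (g : β → E) :
    ∑ b, fiberSum r w b • g b = ∑ a, w a • g (r a) := by
  simp only [fiberSum, Finset.sum_smul]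
  rw [← Finset.sum_fiberwise Finset.univ r]
  refine Finset.sum_congr rfl fun b _ => Finset.sum_congr rfl fun a ha => ?_
  rw [(Finset.mem_filter.mp ha).2]

theorem sum_fiberSum [Fintype β] (r : α → β) (w : α → ℝ) : ∑ b, fiberSum r w b = ∑ a, w a :=
  Finset.sum_fiberwise Finset.univ r w

theorem fiberSum_nonneg {r : α → β} {w : α → ℝ} (hw : ∀ a, 0 ≤ w a) (b : β) :
    0 ≤ fiberSum r w b :=
  Finset.sum_nonneg fun a _ => hw a

theorem le_fiberSum {r : α → β} {w : α → ℝ} (hw : ∀ a, 0 ≤ w a) (a : α) :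
    w a ≤ fiberSum r w (r a) :=
  Finset.single_le_sum (fun a _ => hw a) (by simp)

end fiberSum

def IsFiberProduct {X A B C : Type*} (r₁ : X → A) (r₂ : X → B) (α : A → C) (β : B → C) : Prop :=
  Function.Injective (fun x => (r₁ x, r₂ x)) ∧ ∀ a b, (∃ x, r₁ x = a ∧ r₂ x = b) ↔ α a = β b

theorem IsFiberProduct.swap {X A B C : Type*} {r₁ : X → A} {r₂ : X → B} {α : A → C} {β : B → C}
    (h : IsFiberProduct r₁ r₂ α β) : IsFiberProduct r₂ r₁ β α :=
  ⟨fun _ _ hxy => h.1 (Prod.swap_injective hxy), fun b a => by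
    rw [eq_comm, ← h.2 a b]
    exact exists_congr fun _ => and_comm⟩

theorem IsFiberProduct.sum_fiber_eq {X A B C : Type*} [Fintype X] [Fintype B] [DecidableEq A]
    [DecidableEq C] {r₁ : X → A} {r₂ : X → B} {α : A → C} {β : B → C}
    (h : IsFiberProduct r₁ r₂ α β) (F : B → ℝ) (a : A) :
    ∑ x with r₁ x = a, F (r₂ x) = ∑ b with β b = α a, F b := by
  refine Finset.sum_nbij r₂ ?_ ?_ ?_ fun _ _ => rfl
  · intro x hx
    simp only [Finset.mem_filter, Finset.mem_univ, true_and] at hx ⊢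
    exact ((h.2 a _).mp ⟨x, hx, rfl⟩).symm
  · intro x hx y hy hxy
    simp only [Finset.coe_filter, Finset.mem_univ, true_and, Set.mem_ofPred_eq] at hx hy
    exact h.1 (Prod.ext (hx.trans hy.symm) hxy)
  · intro b hb
    simp only [Finset.coe_filter, Finset.mem_univ, true_and, Set.mem_ofPred_eq] at hb
    obtain ⟨x, hx, rfl⟩ := (h.2 a b).mpr hb.symm
    exact ⟨x, by simpa using hx, rfl⟩

section coupling

variable {X A B C : Type*} [Fintype A] [Fintype B] [DecidableEq C]
  {r₁ : X → A} {r₂ : X → B} {α : A → C} {β : B → C}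

-- Where the marginal `fiberSum α w₁` vanishes, so does `w₁ (r₁ x)`: the junk `/ 0` is harmless.
def couplingWeight (r₁ : X → A) (r₂ : X → B) (α : A → C) (w₁ : A → ℝ) (w₂ : B → ℝ) (x : X) : ℝ :=
  w₁ (r₁ x) * w₂ (r₂ x) / fiberSum α w₁ (α (r₁ x))

theorem IsFiberProduct.fiberSum_couplingWeight [Fintype X] [DecidableEq A]
    (h : IsFiberProduct r₁ r₂ α β) {w₁ : A → ℝ} {w₂ : B → ℝ} (hw₁ : ∀ a, 0 ≤ w₁ a)
    (hmarg : fiberSum α w₁ = fiberSum β w₂) :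
    fiberSum r₁ (couplingWeight r₁ r₂ α w₁ w₂) = w₁ := by
  funext a
  have hfiber : fiberSum r₁ (couplingWeight r₁ r₂ α w₁ w₂) a =
      w₁ a / fiberSum α w₁ (α a) * fiberSum β w₂ (α a) := by
    calc fiberSum r₁ (couplingWeight r₁ r₂ α w₁ w₂) a
        = ∑ x with r₁ x = a, w₁ a / fiberSum α w₁ (α a) * w₂ (r₂ x) := by
          refine Finset.sum_congr rfl fun x hx => ?_
          rw [couplingWeight, (Finset.mem_filter.mp hx).2]
          ring
      _ = w₁ a / fiberSum α w₁ (α a) * fiberSum β w₂ (α a) := by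
          rw [← Finset.mul_sum, h.sum_fiber_eq]
          rfl
  rw [hfiber, ← hmarg]
  rcases eq_or_ne (fiberSum α w₁ (α a)) 0 with h0 | h0
  · rw [h0, mul_zero]
    exact (le_antisymm (h0 ▸ le_fiberSum hw₁ a) (hw₁ a)).symm
  · exact div_mul_cancel₀ _ h0

theorem IsFiberProduct.couplingWeight_swap (h : IsFiberProduct r₁ r₂ α β) {w₁ : A → ℝ}
    {w₂ : B → ℝ} (hmarg : fiberSum α w₁ = fiberSum β w₂) :
    couplingWeight r₂ r₁ β w₂ w₁ = couplingWeight r₁ r₂ α w₁ w₂ := by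
  funext x
  rw [couplingWeight, couplingWeight, ← hmarg, ← (h.2 _ _).mp ⟨x, rfl, rfl⟩, mul_comm]

theorem IsFiberProduct.exists_coupling [Fintype X] [DecidableEq A] [DecidableEq B]
    (h : IsFiberProduct r₁ r₂ α β) {w₁ : A → ℝ} {w₂ : B → ℝ} (hw₁ : ∀ a, 0 ≤ w₁ a)
    (hw₂ : ∀ b, 0 ≤ w₂ b) (hmarg : fiberSum α w₁ = fiberSum β w₂) :
    ∃ w : X → ℝ, (∀ x, 0 ≤ w x) ∧ fiberSum r₁ w = w₁ ∧ fiberSum r₂ w = w₂ := by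
  refine ⟨couplingWeight r₁ r₂ α w₁ w₂, fun x => ?_, h.fiberSum_couplingWeight hw₁ hmarg, ?_⟩
  · exact div_nonneg (mul_nonneg (hw₁ _) (hw₂ _)) (fiberSum_nonneg hw₁ _)
  · rw [← h.couplingWeight_swap hmarg]
    exact h.swap.fiberSum_couplingWeight hw₂ hmarg.symm

end coupling

theorem volume_setOf_comp_sumEquiv {ι₁ ι₂ ι : Type*} [Fintype ι₁] [Fintype ι₂] [Fintype ι]
    (σ : ι₁ ⊕ ι₂ ≃ ι) (S₁ : Set (ι₁ → ℝ)) (S₂ : Set (ι₂ → ℝ)) :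
    volume {q : ι → ℝ | (fun i => q (σ (.inl i))) ∈ S₁ ∧ (fun j => q (σ (.inr j))) ∈ S₂} =
      volume S₁ * volume S₂ := by
  let T := (MeasurableEquiv.piCongrLeft (fun _ => ℝ) σ).symm.trans
    (MeasurableEquiv.sumPiEquivProdPi fun _ => ℝ)
  have hT : MeasurePreserving T volume volume :=
    (volume_measurePreserving_sumPiEquivProdPi _).comp
      ((volume_measurePreserving_piCongrLeft _ σ).symm _)
  have hpre : {q : ι → ℝ | (fun i => q (σ (.inl i))) ∈ S₁ ∧ (fun j => q (σ (.inr j))) ∈ S₂} =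
      T ⁻¹' S₁ ×ˢ S₂ := rfl
  rw [hpre, hT.measure_preimage_equiv, Measure.volume_eq_prod, Measure.prod_prod]

section restriction

variable {V : Type} (G : SimpleGraph V)

def restrictCor (s : Set V) :
    (V → ℝ) × (G.edgeSet → ℝ) →ₗ[ℝ] (s → ℝ) × ((G.induce s).edgeSet → ℝ) :=
  (LinearMap.funLeft ℝ ℝ Subtype.val).prodMap
    (LinearMap.funLeft ℝ ℝ (Embedding.induce s).mapEdgeSet)

theorem restrictCor_corPoint (s : Set V) (f : V → Bool) :
    restrictCor G s (corPoint G f) = corPoint (G.induce s) (s.domRestrict f) := by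
  refine Prod.ext rfl (funext fun ⟨e, he⟩ => ?_)
  induction e using Sym2.ind with
  | _ a b => rfl

theorem restrictCor_mem_cor (s : Set V) {x : (V → ℝ) × (G.edgeSet → ℝ)} (hx : x ∈ cor G) :
    restrictCor G s x ∈ cor (G.induce s) := by
  have himage : restrictCor G s '' cor G ⊆ cor (G.induce s) := by
    rw [cor, LinearMap.image_convexHull, ← Set.range_comp]
    exact convexHull_mono
      (Set.range_subset_iff.2 fun f => ⟨_, (restrictCor_corPoint G s f).symm⟩)
  exact himage ⟨x, hx, rfl⟩

theorem restrictCor_sum_smul_corPoint [Fintype V] [DecidableEq V] (s : Set V)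
    [DecidablePred (· ∈ s)] (w : (V → Bool) → ℝ) :
    restrictCor G s (∑ f, w f • corPoint G f) =
      ∑ g, fiberSum s.domRestrict w g • corPoint (G.induce s) g := by
  simp only [map_sum, map_smul, restrictCor_corPoint, sum_fiberSum_smul]

end restriction

section gluing

variable {V : Type} (G : SimpleGraph V) {V₁ V₂ : Set V}

theorem mem_of_mem_mapEdgeSet_induce {s : Set V} (e : (G.induce s).edgeSet) {x : V}
    (hx : x ∈ ((Embedding.induce s).mapEdgeSet e : Sym2 V)) : x ∈ s := by
  obtain ⟨y, -, rfl⟩ := Sym2.mem_map.mp hx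
  exact y.2

theorem exists_mapEdgeSet_induce_eq {s : Set V} (e : G.edgeSet)
    (he : ∀ x ∈ (e : Sym2 V), x ∈ s) : ∃ e', (Embedding.induce s).mapEdgeSet e' = e := by
  obtain ⟨e, hG⟩ := e
  induction e using Sym2.ind with
  | _ a b =>
    have ha := he a (Sym2.mem_mk_left a b)
    have hb := he b (Sym2.mem_mk_right a b)
    exact ⟨⟨s(⟨a, ha⟩, ⟨b, hb⟩), by simpa using hG⟩,
      Subtype.ext (by simp [Embedding.mapEdgeSet, Hom.mapEdgeSet])⟩

theorem sumElim_mapEdgeSet_induce_injective (hI : (V₁ ∩ V₂).Subsingleton) :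
    Function.Injective (Sum.elim (Embedding.induce (G := G) V₁).mapEdgeSet
      (Embedding.induce (G := G) V₂).mapEdgeSet) := by
  have hdisj : ∀ (e₁ : (G.induce V₁).edgeSet) (e₂ : (G.induce V₂).edgeSet),
      (Embedding.induce V₁).mapEdgeSet e₁ ≠ (Embedding.induce V₂).mapEdgeSet e₂ := by
    intro e₁ e₂ h
    obtain ⟨⟨e, hG⟩, he⟩ : ∃ e : G.edgeSet, (Embedding.induce V₁).mapEdgeSet e₁ = e := ⟨_, rfl⟩
    induction e using Sym2.ind with
    | _ a b =>
      have hab : ∀ x ∈ s(a, b), x ∈ V₁ ∩ V₂ := fun x hx =>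
        ⟨mem_of_mem_mapEdgeSet_induce G e₁ (he ▸ hx),
          mem_of_mem_mapEdgeSet_induce G e₂ (h ▸ he ▸ hx)⟩
      exact G.loopless.irrefl a (hI (hab a (Sym2.mem_mk_left a b))
        (hab b (Sym2.mem_mk_right a b)) ▸ hG)
  rintro (e₁ | e₁) (e₂ | e₂) h
  · exact congrArg Sum.inl ((Embedding.induce V₁).mapEdgeSet.injective h)
  · exact absurd h (hdisj e₁ e₂)
  · exact absurd h.symm (hdisj e₂ e₁)
  · exact congrArg Sum.inr ((Embedding.induce V₂).mapEdgeSet.injective h)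

theorem sumElim_mapEdgeSet_induce_surjective
    (hE : ∀ e ∈ G.edgeSet, (∀ x ∈ e, x ∈ V₁) ∨ (∀ x ∈ e, x ∈ V₂)) :
    Function.Surjective (Sum.elim (Embedding.induce (G := G) V₁).mapEdgeSet
      (Embedding.induce (G := G) V₂).mapEdgeSet) := by
  intro e
  rcases hE e e.2 with h₁ | h₂
  · obtain ⟨e', he'⟩ := exists_mapEdgeSet_induce_eq G e h₁
    exact ⟨.inl e', he'⟩
  · obtain ⟨e', he'⟩ := exists_mapEdgeSet_induce_eq G e h₂
    exact ⟨.inr e', he'⟩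

theorem eq_of_restrictCor_eq (hU : V₁ ∪ V₂ = Set.univ)
    (hE : ∀ e ∈ G.edgeSet, (∀ x ∈ e, x ∈ V₁) ∨ (∀ x ∈ e, x ∈ V₂))
    {x y : (V → ℝ) × (G.edgeSet → ℝ)} (h₁ : restrictCor G V₁ x = restrictCor G V₁ y)
    (h₂ : restrictCor G V₂ x = restrictCor G V₂ y) : x = y := by
  refine Prod.ext (funext fun i => ?_) (funext fun e => ?_)
  · rcases (hU ▸ Set.mem_univ i : i ∈ V₁ ∪ V₂) with hi | hi
    · exact congrFun (congrArg Prod.fst h₁) ⟨i, hi⟩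
    · exact congrFun (congrArg Prod.fst h₂) ⟨i, hi⟩
  · obtain ⟨e' | e', rfl⟩ := sumElim_mapEdgeSet_induce_surjective G hE e
    · exact congrFun (congrArg Prod.snd h₁) e'
    · exact congrFun (congrArg Prod.snd h₂) e'

end gluing

theorem isFiberProduct_domRestrict {V β : Type*} {V₁ V₂ : Set V} {v : V}
    (hU : V₁ ∪ V₂ = Set.univ) (hI : V₁ ∩ V₂ ⊆ {v}) (hv₁ : v ∈ V₁) (hv₂ : v ∈ V₂) :
    IsFiberProduct (V₁.domRestrict : (V → β) → V₁ → β) V₂.domRestrict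
      (fun f => f ⟨v, hv₁⟩) (fun g => g ⟨v, hv₂⟩) := by
  classical
  have hmem : ∀ x, x ∉ V₁ → x ∈ V₂ := fun x hx =>
    ((hU ▸ Set.mem_univ x : x ∈ V₁ ∪ V₂)).resolve_left hx
  refine ⟨fun h h' hhh' => funext fun x => ?_, fun f g => ⟨?_, fun hfg => ?_⟩⟩
  · by_cases hx : x ∈ V₁
    · exact congrFun (congrArg Prod.fst hhh') ⟨x, hx⟩
    · exact congrFun (congrArg Prod.snd hhh') ⟨x, hmem x hx⟩
  · rintro ⟨h, rfl, rfl⟩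
    rfl
  · refine ⟨fun x => if hx : x ∈ V₁ then f ⟨x, hx⟩ else g ⟨x, hmem x hx⟩,
      funext fun x => dif_pos x.2, funext fun x => ?_⟩
    by_cases hx : (x : V) ∈ V₁
    · obtain rfl : (x : V) = v := hI ⟨hx, x.2⟩
      simpa [hx] using hfg
    · simp [hx]

theorem fiberSum_eval_of_sum_smul_corPoint {V : Type} [Fintype V] [DecidableEq V]
    (G : SimpleGraph V) {w : (V → Bool) → ℝ} (hw : ∑ f, w f = 1)
    {x : (V → ℝ) × (G.edgeSet → ℝ)} (hx : ∑ f, w f • corPoint G f = x) (u : V) :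
    fiberSum (fun f : V → Bool => f u) w = fun b => if b then x.1 u else 1 - x.1 u := by
  have htrue : fiberSum (fun f : V → Bool => f u) w true = x.1 u := by
    simp [← hx, Prod.fst_sum, corPoint, fiberSum, Finset.sum_filter]
  have hfalse : fiberSum (fun f : V → Bool => f u) w false = 1 - x.1 u := by
    have := sum_fiberSum (fun f : V → Bool => f u) w
    rw [Fintype.sum_bool, hw, htrue] at this
    linarith
  funext b
  cases b
  · exact hfalse
  · exact htrue

theorem mem_cor_iff_restrictCor_mem {V : Type} [Fintype V] (G : SimpleGraph V) {V₁ V₂ : Set V}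
    {v : V} (hU : V₁ ∪ V₂ = Set.univ) (hI : V₁ ∩ V₂ = {v})
    (hE : ∀ e ∈ G.edgeSet, (∀ x ∈ e, x ∈ V₁) ∨ (∀ x ∈ e, x ∈ V₂))
    (x : (V → ℝ) × (G.edgeSet → ℝ)) :
    x ∈ cor G ↔
      restrictCor G V₁ x ∈ cor (G.induce V₁) ∧ restrictCor G V₂ x ∈ cor (G.induce V₂) := by
  classical
  refine ⟨fun hx => ⟨restrictCor_mem_cor G V₁ hx, restrictCor_mem_cor G V₂ hx⟩, ?_⟩
  rintro ⟨h₁, h₂⟩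
  obtain ⟨w₁, hw₁, hsum₁, hx₁⟩ := mem_convexHull_range_iff_exists_sum_smul.mp h₁
  obtain ⟨w₂, hw₂, hsum₂, hx₂⟩ := mem_convexHull_range_iff_exists_sum_smul.mp h₂
  have hv : v ∈ V₁ ∩ V₂ := hI ▸ rfl
  have hmarg : fiberSum (fun f : V₁ → Bool => f ⟨v, hv.1⟩) w₁ =
      fiberSum (fun g : V₂ → Bool => g ⟨v, hv.2⟩) w₂ := by
    rw [fiberSum_eval_of_sum_smul_corPoint _ hsum₁ hx₁,
      fiberSum_eval_of_sum_smul_corPoint _ hsum₂ hx₂]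
    rfl
  obtain ⟨w, hw, hw₁', hw₂'⟩ :=
    (isFiberProduct_domRestrict hU hI.subset hv.1 hv.2).exists_coupling hw₁ hw₂ hmarg
  have hglue : ∑ f, w f • corPoint G f = x := by
    refine eq_of_restrictCor_eq G hU hE ?_ ?_
    · rw [restrictCor_sum_smul_corPoint, hw₁', hx₁]
    · rw [restrictCor_sum_smul_corPoint, hw₂', hx₂]
  refine mem_convexHull_range_iff_exists_sum_smul.mpr ⟨w, hw, ?_, hglue⟩
  rw [← sum_fiberSum V₁.domRestrict, hw₁', hsum₁]

theorem stmt18_general {V : Type} [Fintype V] (G : SimpleGraph V)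
    [DecidableRel G.Adj] (V₁ V₂ : Set V) [DecidablePred (· ∈ V₁)] [DecidablePred (· ∈ V₂)]
    (v : V) (hU : V₁ ∪ V₂ = Set.univ) (hI : V₁ ∩ V₂ = {v})
    (hE : ∀ e ∈ G.edgeSet, (∀ x ∈ e, x ∈ V₁) ∨ (∀ x ∈ e, x ∈ V₂))
    [DecidableRel (G.induce V₁).Adj] [DecidableRel (G.induce V₂).Adj] :
    (∀ (p : V → ℝ) (q : G.edgeSet → ℝ),
      (p, q) ∈ cor G ↔
        (((fun i : V₁ => p i),
            fun e => q ((SimpleGraph.Embedding.induce (G := G) V₁).mapEdgeSet e)) ∈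
              cor (G.induce V₁) ∧
         ((fun i : V₂ => p i),
            fun e => q ((SimpleGraph.Embedding.induce (G := G) V₂).mapEdgeSet e)) ∈
              cor (G.induce V₂))) ∧
    (∀ p : V → ℝ, (∀ i, 0 ≤ p i ∧ p i ≤ 1) →
      volume {q : G.edgeSet → ℝ | (p, q) ∈ cor G} =
        volume {q₁ : (G.induce V₁).edgeSet → ℝ | ((fun i : V₁ => p i), q₁) ∈ cor (G.induce V₁)} *
        volume {q₂ : (G.induce V₂).edgeSet → ℝ | ((fun i : V₂ => p i), q₂) ∈ cor (G.induce V₂)}) := by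
  have hcor := mem_cor_iff_restrictCor_mem G hU hI hE
  refine ⟨fun p q => hcor (p, q), fun p _ => ?_⟩
  let σ := Equiv.ofBijective _ ⟨sumElim_mapEdgeSet_induce_injective G
    (hI ▸ Set.subsingleton_singleton), sumElim_mapEdgeSet_induce_surjective G hE⟩
  rw [← volume_setOf_comp_sumEquiv σ]
  congr 1
  ext q
  exact hcor (p, q)

/-- If `G` is obtained by gluing the induced subgraphs `G₁ = G[V₁]` and `G₂ = G[V₂]` along a
single vertex `v` (every edge lying inside `V₁` or inside `V₂`), then `(p, q) ∈ COR(G)` iff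
both restrictions belong to the respective correlation polytopes; consequently, for
`p : V → [0,1]` the slice of `COR(G)` is (up to the identification `E = E₁ ⊔ E₂`) the product
of the two slices, and its volume is the product of their volumes. -/
theorem stmt18 {V : Type} [Fintype V] [DecidableEq V] (G : SimpleGraph V)
    [DecidableRel G.Adj] (V₁ V₂ : Set V) [DecidablePred (· ∈ V₁)] [DecidablePred (· ∈ V₂)]
    (v : V) (hU : V₁ ∪ V₂ = Set.univ) (hI : V₁ ∩ V₂ = {v})
    (hE : ∀ e ∈ G.edgeSet, (∀ x ∈ e, x ∈ V₁) ∨ (∀ x ∈ e, x ∈ V₂))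
    [DecidableRel (G.induce V₁).Adj] [DecidableRel (G.induce V₂).Adj] :
    (∀ (p : V → ℝ) (q : G.edgeSet → ℝ),
      (p, q) ∈ cor G ↔
        (((fun i : V₁ => p i),
            fun e => q ((SimpleGraph.Embedding.induce (G := G) V₁).mapEdgeSet e)) ∈
              cor (G.induce V₁) ∧
         ((fun i : V₂ => p i),
            fun e => q ((SimpleGraph.Embedding.induce (G := G) V₂).mapEdgeSet e)) ∈
              cor (G.induce V₂))) ∧
    (∀ p : V → ℝ, (∀ i, 0 ≤ p i ∧ p i ≤ 1) →
      volume {q : G.edgeSet → ℝ | (p, q) ∈ cor G} =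
        volume {q₁ : (G.induce V₁).edgeSet → ℝ | ((fun i : V₁ => p i), q₁) ∈ cor (G.induce V₁)} *
        volume {q₂ : (G.induce V₂).edgeSet → ℝ | ((fun i : V₂ => p i), q₂) ∈ cor (G.induce V₂)}) :=
  stmt18_general G V₁ V₂ v hU hI hE
end
end

section
/- Let N ≥ 2 and 0 ≤ k ≤ N be integers and set n := N − k; identify {1,…,N} with the disjoint union of P := {1,…,n} (plain events) and K := {n+1,…,N} (complemented events). Let t > 0 be a real number satisfying 2t(k² − 3k + N) ≤ (k−1)(k−2). Then for every q : {unordered pairs of {1,…,N}} → ℝ with 0 ≤ q_{ij} ≤ t for all pairs, the symmetric-slice inclusion–exclusion inequality holds: −Σ_{{i,j}⊆P} q_{ij} − Σ_{{i,j}⊆K} q_{ij} + Σ_{i∈P, j∈K} q_{ij} ≤ (k−1)(k−2)/2 + ((N+3)k − 2k² − N)·t. In particular, for k = 0 (and for k = 3) the inequality holds for all such q whenever t ≤ 1/N. -/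
open Finset

lemma stmt19_card (N m : ℕ) (h : m ≤ N) :
    (Finset.univ.filter (fun i : Fin N => (i : ℕ) < m)).card = m := by
  have : Finset.univ.filter (fun i : Fin N => (i : ℕ) < m)
      = Finset.map (Fin.castLEEmb h) Finset.univ := by
    ext i
    simp only [Finset.mem_filter, Finset.mem_univ, true_and, Finset.mem_map,
      Fin.castLEEmb_apply]
    constructor
    · intro hi; exact ⟨⟨i, hi⟩, rfl⟩
    · rintro ⟨j, rfl⟩; exact j.isLt
  rw [this, Finset.card_map, Finset.card_univ, Fintype.card_fin]

/-- The symmetric-slice inclusion–exclusion inequality for `N` events with `k` complemented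
events (`P` the plain indices, `K` the complemented ones), valid on the transportation slice
`0 ≤ q_{ij} ≤ t` whenever `2t(k² - 3k + N) ≤ (k-1)(k-2)`. -/
theorem stmt19 (N k : ℕ) (hN : 2 ≤ N) (hk : k ≤ N) (t : ℝ) (ht0 : 0 < t)
    (ht : 2 * t * ((k : ℝ) ^ 2 - 3 * k + N) ≤ ((k : ℝ) - 1) * ((k : ℝ) - 2))
    (q : Fin N → Fin N → ℝ) (hsym : ∀ i j, q i j = q j i)
    (hq : ∀ i j, i ≠ j → 0 ≤ q i j ∧ q i j ≤ t) :
    -(∑ i ∈ Finset.univ.filter (fun i : Fin N => (i : ℕ) < N - k),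
        ∑ j ∈ Finset.univ.filter (fun i : Fin N => (i : ℕ) < N - k),
          if i < j then q i j else 0)
      - (∑ i ∈ (Finset.univ.filter (fun i : Fin N => (i : ℕ) < N - k))ᶜ,
          ∑ j ∈ (Finset.univ.filter (fun i : Fin N => (i : ℕ) < N - k))ᶜ,
            if i < j then q i j else 0)
      + (∑ i ∈ Finset.univ.filter (fun i : Fin N => (i : ℕ) < N - k),
          ∑ j ∈ (Finset.univ.filter (fun i : Fin N => (i : ℕ) < N - k))ᶜ, q i j)
      ≤ ((k : ℝ) - 1) * ((k : ℝ) - 2) / 2 + (((N : ℝ) + 3) * k - 2 * (k : ℝ) ^ 2 - N) * t := by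
  set P := Finset.univ.filter (fun i : Fin N => (i : ℕ) < N - k) with hP
  have hqnn : ∀ (s r : Finset (Fin N)),
      (0 : ℝ) ≤ ∑ i ∈ s, ∑ j ∈ r, if i < j then q i j else 0 := by
    intro s r
    refine Finset.sum_nonneg fun i _ => Finset.sum_nonneg fun j _ => ?_
    split
    · exact (hq i j (ne_of_lt ‹i < j›)).1
    · exact le_refl 0
  have hPcard : P.card = N - k := stmt19_card N (N - k) (Nat.sub_le _ _)
  have hKcard : Pᶜ.card = k := by
    have := Finset.card_compl P
    rw [hPcard, Fintype.card_fin] at this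
    omega
  have h3 : ∑ i ∈ P, ∑ j ∈ Pᶜ, q i j ≤ ((N : ℝ) - k) * k * t := by
    have : ∑ i ∈ P, ∑ j ∈ Pᶜ, q i j ≤ ∑ i ∈ P, ∑ j ∈ Pᶜ, t := by
      refine Finset.sum_le_sum fun i hi => Finset.sum_le_sum fun j hj => ?_
      have hij : i ≠ j := by
        rintro rfl
        exact (Finset.mem_compl.mp hj) hi
      exact (hq i j hij).2
    refine this.trans ?_
    rw [Finset.sum_const, Finset.sum_const, hPcard, hKcard, nsmul_eq_mul, nsmul_eq_mul]
    have : ((N - k : ℕ) : ℝ) = (N : ℝ) - k := by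
      rw [Nat.cast_sub hk]
    rw [this]; ring_nf; rfl
  have hmain : ((N : ℝ) - k) * k * t
      ≤ ((k : ℝ) - 1) * ((k : ℝ) - 2) / 2 + (((N : ℝ) + 3) * k - 2 * (k : ℝ) ^ 2 - N) * t := by
    nlinarith [ht]
  have h1 := hqnn P P
  have h2 := hqnn Pᶜ Pᶜ
  linarith
end
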